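/- arXiv:1704.04448 — 9 statements merged into one kernel-verified Lean document; each statement's English description precedes it below -/
import Mathlib

section
/- Let β : ℕ → ℝ satisfy 0 ≤ β(l) ≤ 1 for all l, and suppose β satisfies the deterministic rarity condition: for every sequence N : ℕ → ℕ with N(m)/√m → ∞ as m → ∞, one has (1/N(m)) · ∑_{l=m}^{m+N(m)} β(l) → 0 as m → ∞. Then the Cesàro averages of β converge to zero: (1/n) · ∑_{l=1}^{n} β(l) → 0 as n → ∞. -/
/-!
Taking `N m = m` in the rarity condition (admissible since `m / √m = √m → ∞`) makes the
averages of `β` over the windows `[m, 2m]` tend to zero. Once these averages are below `ε`,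
the window starting at `⌊n/2⌋` covers `[⌊n/2⌋, n)`, so halving `n` repeatedly bounds the
partial sums `∑_{l<n} β l` by a constant plus `2εn`.
-/

open Filter Finset

/-- The deterministic rarity condition: for every sequence `N` with `N m / √m → ∞`,
the window averages `(1/N m) ∑_{l=m}^{m+N m} β l` tend to zero. -/
def RarityCondition (β : ℕ → ℝ) : Prop :=
  ∀ N : ℕ → ℕ,
    Tendsto (fun m => (N m : ℝ) / Real.sqrt m) atTop atTop →
    Tendsto (fun m => (1 / (N m : ℝ)) * ∑ l ∈ Finset.Icc m (m + N m), β l) atTop (nhds 0)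

lemma Real.tendsto_natCast_div_sqrt_atTop :
    Tendsto (fun m : ℕ => (m : ℝ) / Real.sqrt m) atTop atTop := by
  simp only [Real.div_sqrt]
  exact Real.tendsto_sqrt_atTop.comp tendsto_natCast_atTop_atTop

lemma sum_range_le_of_forall_sum_Icc_double_le {a : ℕ → ℝ} (ha : ∀ l, 0 ≤ a l) {ε : ℝ}
    (hε : 0 ≤ ε) {M : ℕ} (hwin : ∀ m, M ≤ m → ∑ l ∈ Icc m (m + m), a l ≤ ε * m) (k : ℕ) :
    ∑ l ∈ range k, a l ≤ ∑ l ∈ range (2 * M), a l + 2 * ε * k := by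
  induction k using Nat.strong_induction_on with
  | _ k ih =>
  by_cases hk : k ≤ 2 * M
  · have hmono : ∑ l ∈ range k, a l ≤ ∑ l ∈ range (2 * M), a l :=
      sum_le_sum_of_subset_of_nonneg (range_subset_range.2 hk) fun l _ _ => ha l
    nlinarith [(Nat.cast_nonneg k : (0 : ℝ) ≤ k)]
  · obtain ⟨m, hmM, hmk, hkm⟩ : ∃ m, M ≤ m ∧ 2 * m ≤ k ∧ k ≤ m + m + 1 := ⟨k / 2, by omega⟩
    have htail : ∑ l ∈ Ico m k, a l ≤ ε * m :=
      (sum_le_sum_of_subset_of_nonneg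
        ((Ico_subset_Ico_right hkm).trans (Ico_add_one_right_eq_Icc m (m + m)).subset)
        fun l _ _ => ha l).trans (hwin m hmM)
    have hhead := ih m (by omega)
    have hmk' : 2 * (m : ℝ) ≤ k := by exact_mod_cast hmk
    rw [← sum_range_add_sum_Ico a (by omega : m ≤ k)]
    nlinarith

lemma tendsto_cesaro_zero_of_tendsto_double_window {a : ℕ → ℝ} (ha : ∀ l, 0 ≤ a l)
    (h : Tendsto (fun m : ℕ => (1 / (m : ℝ)) * ∑ l ∈ Icc m (m + m), a l) atTop (nhds 0)) :
    Tendsto (fun n : ℕ => (1 / (n : ℝ)) * ∑ l ∈ Icc 1 n, a l) atTop (nhds 0) := by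
  refine tendsto_order.2 ⟨fun b hb => Eventually.of_forall fun n =>
    hb.trans_le (mul_nonneg (by positivity) (sum_nonneg fun l _ => ha l)), fun b hb => ?_⟩
  obtain ⟨M, hM⟩ : ∃ M, ∀ m, M ≤ m → ∑ l ∈ Icc m (m + m), a l ≤ b / 8 * m := by
    refine ((eventually_ge_atTop 1).and (h.eventually_lt_const (by positivity : (0 : ℝ) < b / 8))
      ).exists_forall_of_atTop.imp fun M hM m hm => ?_
    obtain ⟨hm1, hlt⟩ := hM m hm
    rw [one_div_mul_eq_div, div_lt_iff₀ (by exact_mod_cast hm1)] at hlt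
    exact hlt.le
  set C := ∑ l ∈ range (2 * M), a l
  have hpartial := sum_range_le_of_forall_sum_Icc_double_le ha (by positivity) hM
  filter_upwards [eventually_ge_atTop 1,
    (tendsto_const_div_atTop_nhds_zero_nat C).eventually_lt_const (half_pos hb)] with n hn hCn
  have hn' : (1 : ℝ) ≤ n := by exact_mod_cast hn
  have hsum : ∑ l ∈ Icc 1 n, a l ≤ C + 2 * (b / 8) * (n + 1) := by
    have hsub : Icc 1 n ⊆ range (n + 1) := fun l hl => by
      simp only [mem_Icc, mem_range] at hl ⊢
      omega
    exact_mod_cast (sum_le_sum_of_subset_of_nonneg hsub fun l _ _ => ha l).trans (hpartial (n + 1))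
  rw [div_lt_iff₀ (by positivity)] at hCn
  rw [one_div_mul_eq_div, div_lt_iff₀ (by positivity)]
  nlinarith

/-- if `0 ≤ β l ≤ 1` and `β` satisfies the rarity condition, then the Cesàro
averages of `β` converge to zero. -/
theorem rarity_implies_cesaro_zero (β : ℕ → ℝ) (hβ : ∀ l, 0 ≤ β l ∧ β l ≤ 1)
    (hrare : RarityCondition β) :
    Tendsto (fun n : ℕ => (1 / (n : ℝ)) * ∑ l ∈ Finset.Icc 1 n, β l) atTop (nhds 0) :=
  tendsto_cesaro_zero_of_tendsto_double_window (fun l => (hβ l).1)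
    (hrare (fun m => m) Real.tendsto_natCast_div_sqrt_atTop)
end

section
/- Let β : ℕ → ℝ satisfy 0 ≤ β(l) ≤ 1 for all l, and suppose there exists a constant C > 0 such that ∑_{l=1}^{n} β(l) ≤ C·√n for all n ≥ 1. Then β satisfies the deterministic rarity condition: for every sequence N : ℕ → ℕ with N(m)/√m → ∞ as m → ∞, one has (1/N(m)) · ∑_{l=m}^{m+N(m)} β(l) → 0 as m → ∞. -/
/-!
Since `β ≥ 0`, the window sum over `[m, m + N]` is at most the partial sum up to `m + N`, hence
at most `C √(m + N) ≤ C (√m + √N)`. Dividing by `N` bounds the window average by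
`C (√m / N + 1 / √N)`, and both terms vanish: the first because `N m / √m → ∞`,
the second because this also forces `N m → ∞`.
-/

open Filter Finset

open Topology

lemma Real.sqrt_add_le_sqrt_add_sqrt {x y : ℝ} (hx : 0 ≤ x) (hy : 0 ≤ y) :
    √(x + y) ≤ √x + √y := by
  rw [Real.sqrt_le_left (by positivity)]
  nlinarith [Real.sq_sqrt hx, Real.sq_sqrt hy, Real.sqrt_nonneg x, Real.sqrt_nonneg y]

section WindowSums

variable {β : ℕ → ℝ} {C : ℝ}

lemma sum_Icc_add_le_of_sum_le_sqrt (hβ : ∀ l, 0 ≤ β l) (hC : 0 ≤ C)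
    (hsum : ∀ n : ℕ, 1 ≤ n → ∑ l ∈ Icc 1 n, β l ≤ C * √n) {m : ℕ} (hm : 1 ≤ m) (k : ℕ) :
    ∑ l ∈ Icc m (m + k), β l ≤ C * (√m + √k) :=
  calc ∑ l ∈ Icc m (m + k), β l
      ≤ ∑ l ∈ Icc 1 (m + k), β l :=
        sum_le_sum_of_subset_of_nonneg (Icc_subset_Icc_left hm) fun l _ _ => hβ l
    _ ≤ C * √(m + k : ℕ) := hsum _ (le_add_right hm)
    _ ≤ C * (√m + √k) := by
      push_cast
      gcongr
      exact Real.sqrt_add_le_sqrt_add_sqrt m.cast_nonneg k.cast_nonneg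

lemma window_average_le_of_sum_le_sqrt (hβ : ∀ l, 0 ≤ β l) (hC : 0 ≤ C)
    (hsum : ∀ n : ℕ, 1 ≤ n → ∑ l ∈ Icc 1 n, β l ≤ C * √n) {m : ℕ} (hm : 1 ≤ m) (k : ℕ) :
    1 / (k : ℝ) * ∑ l ∈ Icc m (m + k), β l ≤ C * (√m / k + 1 / √k) :=
  calc 1 / (k : ℝ) * ∑ l ∈ Icc m (m + k), β l
      ≤ 1 / (k : ℝ) * (C * (√m + √k)) := by
        gcongr
        exact sum_Icc_add_le_of_sum_le_sqrt hβ hC hsum hm k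
    _ = C * (√m / k + √k / k) := by ring
    _ = C * (√m / k + 1 / √k) := by rw [Real.sqrt_div_self']

end WindowSums

section Asymptotics

variable {f : ℕ → ℝ}

lemma tendsto_atTop_of_div_sqrt_tendsto_atTop
    (hf : Tendsto (fun m => f m / √m) atTop atTop) : Tendsto f atTop atTop := by
  refine tendsto_atTop_mono' atTop ?_ hf
  filter_upwards [hf.eventually_gt_atTop 0, eventually_ge_atTop 1] with m hq hm
  have hfm : 0 < f m :=
    lt_of_not_ge fun h => (div_nonpos_of_nonpos_of_nonneg h (Real.sqrt_nonneg _)).not_gt hq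
  exact div_le_self hfm.le (Real.one_le_sqrt.mpr (by exact_mod_cast hm))

lemma tendsto_sqrt_div_add_inv_sqrt_of_div_sqrt_tendsto_atTop
    (hf : Tendsto (fun m => f m / √m) atTop atTop) :
    Tendsto (fun m : ℕ => √m / f m + 1 / √(f m)) atTop (𝓝 0) := by
  have hsqrt_div : Tendsto (fun m : ℕ => √m / f m) atTop (𝓝 0) := by
    simpa only [Pi.inv_def, inv_div] using hf.inv_tendsto_atTop
  have hinv_sqrt : Tendsto (fun m => 1 / √(f m)) atTop (𝓝 0) := by
    simpa only [one_div, Function.comp_def] using tendsto_inv_atTop_zero.comp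
      (Real.tendsto_sqrt_atTop.comp (tendsto_atTop_of_div_sqrt_tendsto_atTop hf))
  simpa only [add_zero] using hsqrt_div.add hinv_sqrt

end Asymptotics

/-- if `0 ≤ β l ≤ 1` and the partial sums of `β` are `O(√n)`,
then `β` satisfies the rarity condition. -/
theorem sqrt_bound_implies_rarity (β : ℕ → ℝ) (hβ : ∀ l, 0 ≤ β l ∧ β l ≤ 1)
    (hO : ∃ C : ℝ, 0 < C ∧ ∀ n : ℕ, 1 ≤ n →
      ∑ l ∈ Finset.Icc 1 n, β l ≤ C * Real.sqrt n) :
    RarityCondition β := by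
  obtain ⟨C, hC, hsum⟩ := hO
  have hβ0 : ∀ l, 0 ≤ β l := fun l => (hβ l).1
  intro N hN
  refine squeeze_zero' (Eventually.of_forall fun m => ?_) ?_
    (by simpa only [mul_zero] using
      (tendsto_sqrt_div_add_inv_sqrt_of_div_sqrt_tendsto_atTop hN).const_mul C)
  · exact mul_nonneg (by positivity) (sum_nonneg fun l _ => hβ0 l)
  · filter_upwards [eventually_ge_atTop 1] with m hm
    exact window_average_le_of_sum_le_sqrt hβ0 hC.le hsum hm (N m)
end

section
/- Let α ∈ (1/2, 1), η₀ > 0, and define the step sizes η(l) = η₀ / l^α for l ≥ 1 and the step-count function m(n) = min{ k ∈ ℕ : ∑_{l=1}^{k+1} η(l) > n }. Let β : ℕ → ℝ with 0 ≤ β(l) ≤ 1 satisfy the deterministic rarity condition. Then the step-size-weighted sums over consecutive epochs vanish: ∑_{l=m(n)}^{m(n+1)−1} η(l)·β(l) → 0 as n → ∞. -/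
open Filter Finset

/-- `mIdx η n` is the least `k` such that `∑_{l=1}^{k+1} η l > n`. -/
noncomputable def mIdx (η : ℕ → ℝ) (n : ℕ) : ℕ :=
  sInf {k : ℕ | (n : ℝ) < ∑ l ∈ Finset.Icc 1 (k + 1), η l}

/-!
Write `S k = ∑_{l=1}^k η l`. Since `S (m n + 1) > n` and `S (m (n+1)) ≤ n + 1`, an epoch carries
`η`-mass less than one beyond its first step. With `η l ≍ l^{-a}` this forces an epoch starting at
`k` to have length at most `N k = ⌈(3/η₀) k^a⌉`, a window with `N k / √k → ∞` because `a > 1/2`.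
As `η` is decreasing and `η k · N k` is bounded, the weighted epoch sum is at most a constant times
the average of `β` over `[k, k + N k]`, which tends to zero by the rarity condition.
-/

section Epochs

variable {η : ℕ → ℝ}

theorem lt_sum_Icc_mIdx (hdiv : Tendsto (fun k => ∑ l ∈ Icc 1 k, η l) atTop atTop) (n : ℕ) :
    (n : ℝ) < ∑ l ∈ Icc 1 (mIdx η n + 1), η l :=
  Nat.sInf_mem (((tendsto_add_atTop_iff_nat 1).2 hdiv).eventually_gt_atTop (n : ℝ)).exists

theorem sum_Icc_le_of_lt_mIdx {n k : ℕ} (hk : k < mIdx η n) :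
    ∑ l ∈ Icc 1 (k + 1), η l ≤ n :=
  not_lt.1 (Nat.notMem_of_lt_sInf hk)

theorem tendsto_mIdx_atTop (hdiv : Tendsto (fun k => ∑ l ∈ Icc 1 k, η l) atTop atTop) :
    Tendsto (mIdx η) atTop atTop := by
  refine tendsto_atTop.2 fun j => ?_
  have hlarge : ∀ᶠ n : ℕ in atTop, ∀ k ∈ range j, ∑ l ∈ Icc 1 (k + 1), η l < n :=
    (eventually_all_finset _).2 fun k _ => tendsto_natCast_atTop_atTop.eventually_gt_atTop _
  filter_upwards [hlarge] with n hn
  by_contra! h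
  exact (hn _ (mem_range.2 h)).asymm (lt_sum_Icc_mIdx hdiv n)

theorem sum_Ioc_mIdx_lt_one (hdiv : Tendsto (fun k => ∑ l ∈ Icc 1 k, η l) atTop atTop) (n : ℕ)
    (h : mIdx η n + 1 ≤ mIdx η (n + 1)) :
    ∑ l ∈ Ioc (mIdx η n + 1) (mIdx η (n + 1)), η l < 1 := by
  set k := mIdx η n
  set K := mIdx η (n + 1)
  have hK : ∑ l ∈ Icc 1 K, η l ≤ n + 1 := by
    have := sum_Icc_le_of_lt_mIdx (η := η) (n := n + 1) (k := K - 1) (by omega)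
    rwa [Nat.sub_add_cancel (by omega), Nat.cast_succ] at this
  have hsplit := sum_Ioc_consecutive η (Nat.zero_le (k + 1)) h
  have hIoc : ∀ m, Icc 1 m = Ioc 0 m := Icc_add_one_left_eq_Ioc 0
  rw [← hIoc, ← hIoc] at hsplit
  linarith [lt_sum_Icc_mIdx hdiv n]

end Epochs

theorem sum_Ico_mul_le_mul_sum_Icc {η β : ℕ → ℝ} {k K W : ℕ} (hη : ∀ l, k ≤ l → η l ≤ η k)
    (hηk : 0 ≤ η k) (hβ : ∀ l, 0 ≤ β l) (hK : K ≤ k + W + 1) :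
    ∑ l ∈ Ico k K, η l * β l ≤ η k * ∑ l ∈ Icc k (k + W), β l := by
  calc ∑ l ∈ Ico k K, η l * β l
      ≤ ∑ l ∈ Ico k K, η k * β l :=
        sum_le_sum fun l hl => mul_le_mul_of_nonneg_right (hη l (mem_Ico.1 hl).1) (hβ l)
    _ ≤ ∑ l ∈ Icc k (k + W), η k * β l :=
        sum_le_sum_of_subset_of_nonneg
          (fun l hl => by simp only [mem_Ico, mem_Icc] at hl ⊢; omega)
          (fun l _ _ => mul_nonneg hηk (hβ l))
    _ = η k * ∑ l ∈ Icc k (k + W), β l := (mul_sum _ _ _).symm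

noncomputable def rarityWindow (C a : ℝ) (m : ℕ) : ℕ :=
  ⌈C * (m : ℝ) ^ a⌉₊

section RarityWindow

variable {C a : ℝ}

theorem tendsto_rarityWindow_div_sqrt (hC : 0 < C) (ha : 1 / 2 < a) :
    Tendsto (fun m : ℕ => (rarityWindow C a m : ℝ) / √m) atTop atTop := by
  have hpow : Tendsto (fun m : ℕ => C * (m : ℝ) ^ (a - 1 / 2)) atTop atTop :=
    ((tendsto_rpow_atTop (by linarith)).comp tendsto_natCast_atTop_atTop).const_mul_atTop hC
  refine tendsto_atTop_mono' _ ?_ hpow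
  filter_upwards [eventually_gt_atTop 0] with m hm
  rw [Real.rpow_sub (by exact_mod_cast hm), ← Real.sqrt_eq_rpow, mul_div_assoc']
  exact div_le_div_of_nonneg_right (Nat.le_ceil _) (Real.sqrt_nonneg _)

theorem eventually_rarityWindow_le (ha : a < 1) :
    ∀ᶠ m : ℕ in atTop, rarityWindow C a m ≤ m := by
  have hpow : Tendsto (fun m : ℕ => (m : ℝ) ^ (1 - a)) atTop atTop :=
    (tendsto_rpow_atTop (by linarith)).comp tendsto_natCast_atTop_atTop
  filter_upwards [hpow.eventually_ge_atTop C, eventually_gt_atTop 0] with m hC hm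
  have hm' : (0 : ℝ) < m := by exact_mod_cast hm
  refine Nat.ceil_le.2 ?_
  calc C * (m : ℝ) ^ a ≤ (m : ℝ) ^ (1 - a) * (m : ℝ) ^ a := by gcongr
    _ = m := by rw [← Real.rpow_add hm', sub_add_cancel, Real.rpow_one]

theorem one_le_rarityWindow (hC : 0 < C) {m : ℕ} (hm : 1 ≤ m) : 1 ≤ rarityWindow C a m := by
  have hm' : (0 : ℝ) < m := by exact_mod_cast hm
  exact Nat.one_le_ceil_iff.2 (by positivity)

end RarityWindow

section PowerSteps

variable {a η₀ : ℝ} {η : ℕ → ℝ}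

theorem powerStep_nonneg (hη : ∀ l : ℕ, 1 ≤ l → η l = η₀ / (l : ℝ) ^ a) (hη₀ : 0 ≤ η₀)
    {l : ℕ} (hl : 1 ≤ l) : 0 ≤ η l := by
  rw [hη l hl]
  positivity

theorem powerStep_le_of_le (hη : ∀ l : ℕ, 1 ≤ l → η l = η₀ / (l : ℝ) ^ a) (hη₀ : 0 ≤ η₀)
    (ha : 0 ≤ a) {l₁ l₂ : ℕ} (hl₁ : 1 ≤ l₁) (h : l₁ ≤ l₂) : η l₂ ≤ η l₁ := by
  have hl₁' : (0 : ℝ) < l₁ := by exact_mod_cast hl₁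
  rw [hη l₁ hl₁, hη l₂ (hl₁.trans h)]
  gcongr

theorem tendsto_sum_Icc_powerStep (hη : ∀ l : ℕ, 1 ≤ l → η l = η₀ / (l : ℝ) ^ a)
    (hη₀ : 0 < η₀) (ha : a ≤ 1) : Tendsto (fun k => ∑ l ∈ Icc 1 k, η l) atTop atTop := by
  have hshift : ∀ k, ∑ l ∈ Icc 1 k, η l = ∑ i ∈ range k, η (i + 1) := by
    intro k
    induction k with
    | zero => simp
    | succ k ih => rw [sum_Icc_succ_top (by omega), ih, sum_range_succ]
  refine tendsto_atTop_mono (fun k => ?_)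
    (Real.tendsto_sum_range_one_div_nat_succ_atTop.const_mul_atTop hη₀)
  rw [hshift, mul_sum]
  gcongr with i
  have hi : (1 : ℝ) ≤ i + 1 := by linarith [i.cast_nonneg (α := ℝ)]
  rw [hη _ (by omega), Nat.cast_succ, mul_one_div]
  exact div_le_div_of_nonneg_left hη₀.le (by positivity) (Real.rpow_le_self_of_one_le hi ha)

theorem powerStep_mul_rarityWindow_le (hη : ∀ l : ℕ, 1 ≤ l → η l = η₀ / (l : ℝ) ^ a)
    (hη₀ : 0 ≤ η₀) (ha : 0 ≤ a) {C : ℝ} (hC : 0 ≤ C) {m : ℕ} (hm : 1 ≤ m) :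
    η m * rarityWindow C a m ≤ η₀ * C + η₀ := by
  have hpow : (1 : ℝ) ≤ (m : ℝ) ^ a := Real.one_le_rpow (by exact_mod_cast hm) ha
  rw [hη m hm]
  calc η₀ / (m : ℝ) ^ a * rarityWindow C a m
      ≤ η₀ / (m : ℝ) ^ a * (C * (m : ℝ) ^ a + 1) := by
        gcongr
        exact (Nat.ceil_lt_add_one (by positivity)).le
    _ = η₀ * C + η₀ / (m : ℝ) ^ a := by field_simp
    _ ≤ η₀ * C + η₀ := by gcongr; exact div_le_self hη₀ hpow

-- The constant `3 / η₀` pays for `η` dropping by at most a factor `3^a ≤ 3` across the window.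
theorem one_le_sum_Ioc_rarityWindow (hη : ∀ l : ℕ, 1 ≤ l → η l = η₀ / (l : ℝ) ^ a)
    (hη₀ : 0 < η₀) (ha₀ : 0 ≤ a) (ha₁ : a ≤ 1) {k : ℕ} (hk : 1 ≤ k)
    (hW : rarityWindow (3 / η₀) a k ≤ k) :
    1 ≤ ∑ l ∈ Ioc (k + 1) (k + 1 + rarityWindow (3 / η₀) a k), η l := by
  set W := rarityWindow (3 / η₀) a k
  have hk' : (0 : ℝ) < k := by exact_mod_cast hk
  have hkpow : 0 < (k : ℝ) ^ a := by positivity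
  have h3 : (3 : ℝ) ^ a ≤ 3 := Real.rpow_le_self_of_one_le (by norm_num) ha₁
  calc (1 : ℝ) ≤ 3 / (3 : ℝ) ^ a := by rw [le_div_iff₀ (by positivity)]; linarith
    _ = 3 / η₀ * (k : ℝ) ^ a * (η₀ / ((3 : ℝ) ^ a * (k : ℝ) ^ a)) := by field_simp
    _ ≤ W * η (3 * k) := by
        rw [hη _ (by omega), Nat.cast_mul, Nat.cast_ofNat, Real.mul_rpow (by norm_num) hk'.le]
        gcongr
        exact Nat.le_ceil _
    _ = #(Ioc (k + 1) (k + 1 + W)) • η (3 * k) := by simp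
    _ ≤ ∑ l ∈ Ioc (k + 1) (k + 1 + W), η l :=
        card_nsmul_le_sum _ _ _ fun l hl => by
          rw [mem_Ioc] at hl
          exact powerStep_le_of_le hη hη₀.le ha₀ (by omega) (by omega)

theorem mIdx_succ_le_add_rarityWindow (hη : ∀ l : ℕ, 1 ≤ l → η l = η₀ / (l : ℝ) ^ a)
    (hη₀ : 0 < η₀) (ha₀ : 0 ≤ a) (ha₁ : a ≤ 1) {n : ℕ} (hk : 1 ≤ mIdx η n)
    (hW : rarityWindow (3 / η₀) a (mIdx η n) ≤ mIdx η n) :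
    mIdx η (n + 1) ≤ mIdx η n + rarityWindow (3 / η₀) a (mIdx η n) := by
  by_contra! h
  refine (sum_Ioc_mIdx_lt_one (tendsto_sum_Icc_powerStep hη hη₀ ha₁) n (by omega)).not_ge ?_
  calc (1 : ℝ) ≤ _ := one_le_sum_Ioc_rarityWindow hη hη₀ ha₀ ha₁ hk hW
    _ ≤ _ := sum_le_sum_of_subset_of_nonneg (Ioc_subset_Ioc_right (by omega))
        fun l hl _ => powerStep_nonneg hη hη₀.le (by simp only [mem_Ioc] at hl; omega)

theorem sum_epoch_le (hη : ∀ l : ℕ, 1 ≤ l → η l = η₀ / (l : ℝ) ^ a) (hη₀ : 0 < η₀)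
    (ha₀ : 0 ≤ a) (ha₁ : a ≤ 1) {β : ℕ → ℝ} (hβ : ∀ l, 0 ≤ β l) {n : ℕ} (hk : 1 ≤ mIdx η n)
    (hW : rarityWindow (3 / η₀) a (mIdx η n) ≤ mIdx η n) :
    ∑ l ∈ Ico (mIdx η n) (mIdx η (n + 1)), η l * β l ≤
      (3 + η₀) * (1 / (rarityWindow (3 / η₀) a (mIdx η n) : ℝ) *
        ∑ l ∈ Icc (mIdx η n) (mIdx η n + rarityWindow (3 / η₀) a (mIdx η n)), β l) := by
  set k := mIdx η n
  set W := rarityWindow (3 / η₀) a k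
  have hW₀ : (W : ℝ) ≠ 0 := by
    exact_mod_cast Nat.one_le_iff_ne_zero.1 (one_le_rarityWindow (by positivity) hk)
  have hK : mIdx η (n + 1) ≤ k + W := mIdx_succ_le_add_rarityWindow hη hη₀ ha₀ ha₁ hk hW
  have hηW : η k * W ≤ 3 + η₀ := by
    simpa [mul_div_cancel₀ _ hη₀.ne'] using
      powerStep_mul_rarityWindow_le hη hη₀.le ha₀ (C := 3 / η₀) (by positivity) hk
  calc ∑ l ∈ Ico k (mIdx η (n + 1)), η l * β l
      ≤ η k * ∑ l ∈ Icc k (k + W), β l :=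
        sum_Ico_mul_le_mul_sum_Icc (fun l hl => powerStep_le_of_le hη hη₀.le ha₀ hk hl)
          (powerStep_nonneg hη hη₀.le hk) hβ (by omega)
    _ = η k * W * (1 / W * ∑ l ∈ Icc k (k + W), β l) := by field_simp
    _ ≤ (3 + η₀) * (1 / W * ∑ l ∈ Icc k (k + W), β l) := by
        gcongr
        exact mul_nonneg (by positivity) (sum_nonneg fun l _ => hβ l)

end PowerSteps

/-- with step sizes `η l = η₀ / l^α`, `α ∈ (1/2,1)`, and `β` satisfying the
rarity condition, the step-size-weighted sums of `β` over consecutive epochs vanish. -/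
theorem weighted_epoch_sums_vanish (a η₀ : ℝ) (ha₁ : 1 / 2 < a) (ha₂ : a < 1)
    (hη₀ : 0 < η₀) (η : ℕ → ℝ) (hη : ∀ l : ℕ, 1 ≤ l → η l = η₀ / (l : ℝ) ^ a)
    (β : ℕ → ℝ) (hβ : ∀ l, 0 ≤ β l ∧ β l ≤ 1) (hrare : RarityCondition β) :
    Tendsto (fun n : ℕ => ∑ l ∈ Finset.Ico (mIdx η n) (mIdx η (n + 1)), η l * β l)
      atTop (nhds 0) := by
  have hm := tendsto_mIdx_atTop (tendsto_sum_Icc_powerStep hη hη₀ ha₂.le)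
  have hT := (hrare _ (tendsto_rarityWindow_div_sqrt (C := 3 / η₀) (by positivity) ha₁)).comp hm
  have hbound := hT.const_mul (3 + η₀)
  rw [mul_zero] at hbound
  refine tendsto_of_tendsto_of_tendsto_of_le_of_le' tendsto_const_nhds hbound ?_ ?_
  · filter_upwards [hm.eventually_ge_atTop 1] with n hk
    exact sum_nonneg fun l hl =>
      mul_nonneg (powerStep_nonneg hη hη₀.le (hk.trans (mem_Ico.1 hl).1)) (hβ l).1
  · filter_upwards [hm.eventually_ge_atTop 1, hm.eventually (eventually_rarityWindow_le ha₂)]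
      with n hk hW
    exact sum_epoch_le hη hη₀ (by linarith) ha₂.le (fun l => (hβ l).1) hk hW
end

section
/- Let K ≥ 1, and let λ_c > 0 and π_c > 0 for c = 1, …, K. Define h(μ, a, b) = (1 − e^{−μa})² + e^{−μa}·(1 − e^{−μb}). Suppose 0 < θ̂^s ≤ θ̂ and θ > 0 satisfy the hit-rate equality ∑_{c=1}^{K} π_c · h(λ_c, θ, 0) = ∑_{c=1}^{K} π_c · h(λ_c, θ̂, θ̂^s). Then θ > θ̂. -/
/-! Without a shallow cache the hit probability is `(1 - e^{-μθ})²`, monotone in `θ ≥ 0`, and a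
positive shallow TTL strictly increases it. So `θ ≤ θ̂` would make every term of the left-hand
aggregate strictly smaller than the matching term on the right. -/

/-- Stationary hit probability of an object with Poisson(`μ`) requests under a two-level
TTL cache with deep-cache TTL `a` and shallow-cache TTL `b`. -/
noncomputable def hitProb (μ a b : ℝ) : ℝ :=
  (1 - Real.exp (-μ * a)) ^ 2 + Real.exp (-μ * a) * (1 - Real.exp (-μ * b))

open Real Finset

theorem hitProb_zero_right (μ a : ℝ) : hitProb μ a 0 = (1 - exp (-μ * a)) ^ 2 := by
  simp [hitProb]

theorem monotoneOn_hitProb_zero_right {μ : ℝ} (hμ : 0 ≤ μ) :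
    MonotoneOn (fun a ↦ hitProb μ a 0) (Set.Ici 0) := by
  intro a ha a' _ haa'
  simp only [hitProb_zero_right]
  have hexp : exp (-μ * a') ≤ exp (-μ * a) :=
    exp_le_exp.2 (by nlinarith)
  have hle_one : exp (-μ * a) ≤ 1 :=
    exp_le_one_iff.2 (by nlinarith [Set.mem_Ici.1 ha])
  exact pow_le_pow_left₀ (by linarith) (by linarith) 2

theorem strictMono_hitProb {μ : ℝ} (hμ : 0 < μ) (a : ℝ) : StrictMono (hitProb μ a) := by
  intro b b' hbb'
  have hexp : exp (-μ * b') < exp (-μ * b) := exp_lt_exp.2 (by nlinarith)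
  unfold hitProb
  gcongr

theorem full_filtering_needs_larger_ttl_general (K : ℕ) (hK : 1 ≤ K)
    (lam pi : Fin K → ℝ) (hlam : ∀ c, 0 < lam c) (hpi : ∀ c, 0 < pi c)
    (θhat θhats θ : ℝ) (h1 : 0 < θhats) (h3 : 0 < θ)
    (heq : ∑ c, pi c * hitProb (lam c) θ 0 = ∑ c, pi c * hitProb (lam c) θhat θhats) :
    θhat < θ := by
  by_contra! hle
  have hlt (c : Fin K) : hitProb (lam c) θ 0 < hitProb (lam c) θhat θhats :=
    (monotoneOn_hitProb_zero_right (hlam c).le (Set.mem_Ici.2 h3.le)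
      (Set.mem_Ici.2 (h3.le.trans hle)) hle).trans_lt (strictMono_hitProb (hlam c) θhat h1)
  have hne : (univ : Finset (Fin K)).Nonempty := ⟨⟨0, hK⟩, mem_univ _⟩
  exact heq.not_lt <| sum_lt_sum_of_nonempty hne fun c _ ↦
    mul_lt_mul_of_pos_left (hlt c) (hpi c)

/-- if a full-filtering cache with deep TTL `θ` achieves the same aggregate
hit rate as a cache with TTL pair `(θ̂, θ̂ˢ)` where `0 < θ̂ˢ ≤ θ̂`, then `θ > θ̂`. -/
theorem full_filtering_needs_larger_ttl (K : ℕ) (hK : 1 ≤ K)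
    (lam pi : Fin K → ℝ) (hlam : ∀ c, 0 < lam c) (hpi : ∀ c, 0 < pi c)
    (θhat θhats θ : ℝ) (h1 : 0 < θhats) (h2 : θhats ≤ θhat) (h3 : 0 < θ)
    (heq : ∑ c, pi c * hitProb (lam c) θ 0 = ∑ c, pi c * hitProb (lam c) θhat θhats) :
    θhat < θ :=
  full_filtering_needs_larger_ttl_general K hK lam pi hlam hpi θhat θhats θ h1 h3 heq
end

section
/- Let K ≥ 1 and λ₁ ≥ λ₂ ≥ … ≥ λ_K > 0, and let 0 < θ̂^s ≤ θ̂ < θ. Define Δ_c = h(λ_c, θ̂, θ̂^s) − h(λ_c, θ, 0) for c = 1, …, K, where h(μ, a, b) = (1 − e^{−μa})² + e^{−μa}·(1 − e^{−μb}). Then there exists c* ∈ {0, 1, …, K} such that Δ_c < 0 for all c ≤ c* and Δ_c ≥ 0 for all c > c*. -/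
/-!
Write `θ = b + c` with `c = θ̂`, `a = θ̂ˢ`, and put `B = e^{-bμ}`, `X = e^{-cμ}`. Then
`Δ(μ) = X (Y(μ) - e^{-aμ})` with `Y = 2B - 1 + (1 - B²) X`, so `Δ(μ) ≥ 0` iff
`-a ≤ log Y(μ) / μ`. Since `a ≤ c`, this forces `μ` into the region `X ≤ Y`, i.e.
`B² X ≤ 2B - 1`, which is closed under decreasing `μ` by concavity of `y ↦ y^t`, `t ≤ 1`.
On that region `log Y(μ) / μ` is strictly decreasing: `μ Y' < Y log Y` follows from
`-y log y ≤ (1 - y²)/2` and `1 - e^{-s} ≤ s`, after which only a polynomial inequality in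
`B, X` is left. Hence the rates with `Δ ≥ 0` form a down-set, and the popular objects with
`Δ < 0` an initial segment of the sorted list.
-/

open Real Set

lemma negMulLog_le_one_sub_sq_div_two {y : ℝ} (hy₀ : 0 < y) (hy₁ : y ≤ 1) :
    negMulLog y ≤ (1 - y ^ 2) / 2 := by
  have hsinh : (y - y⁻¹) / 2 ≤ log y :=
    sinh_log hy₀ ▸ sinh_le_self_iff.2 (log_nonpos hy₀.le hy₁)
  calc negMulLog y = -(y * log y) := by rw [negMulLog, neg_mul]
    _ ≤ -(y * ((y - y⁻¹) / 2)) := neg_le_neg (mul_le_mul_of_nonneg_left hsinh hy₀.le)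
    _ = (1 - y ^ 2) / 2 := by field_simp; ring

lemma two_mul_sub_one_rpow_le {u t : ℝ} (hu : 1 / 2 ≤ u) (ht₀ : 0 ≤ t) (ht₁ : t ≤ 1) :
    (2 * u - 1) ^ t ≤ 2 * u ^ t - 1 := by
  have h := (concaveOn_rpow ht₀ ht₁).2 (show 2 * u - 1 ∈ Ici 0 by simp; linarith)
    (show (1 : ℝ) ∈ Ici 0 by simp) (show (0 : ℝ) ≤ 1 / 2 by norm_num)
    (show (0 : ℝ) ≤ 1 / 2 by norm_num) (by norm_num)
  simp only [smul_eq_mul, one_rpow] at h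
  rw [show 1 / 2 * (2 * u - 1) + 1 / 2 * 1 = u by ring] at h
  linarith

lemma one_sub_sq_div_two_le {B X : ℝ} (hB : B < 1) (hX : 0 < X)
    (hreg : B ^ 2 * X ≤ 2 * B - 1) :
    (1 - (2 * B - 1 + (1 - B ^ 2) * X) ^ 2) / 2 ≤
      2 * (1 - B) * B * (1 - B * X) + (1 - X) * (1 - B ^ 2) * X := by
  have hB₀ : 1 / 2 < B := by nlinarith [mul_pos (pow_pos (by nlinarith : (0 : ℝ) < B) 2) hX]
  set k := 1 + B - (1 - B) * (1 + B) ^ 2 / 2 with hk_def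
  have hk : 0 < k := by nlinarith [mul_nonneg (sq_nonneg B) (by linarith : (0 : ℝ) ≤ 1 + B)]
  have hfactor : 2 * (1 - B) * B * (1 - B * X) + (1 - X) * (1 - B ^ 2) * X -
      (1 - (2 * B - 1 + (1 - B ^ 2) * X) ^ 2) / 2 = (1 - B) * X * (2 * B - X * k) := by
    rw [hk_def]; ring
  have hcubic : 2 * B ^ 3 - (2 * B - 1) * k =
      (1 - B) * ((2 * B - 1) + (1 - B) ^ 2 * (3 / 2 + B)) := by
    rw [hk_def]; ring
  have hcubic_nonneg : 0 ≤ 2 * B ^ 3 - (2 * B - 1) * k := hcubic ▸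
    mul_nonneg (by linarith) (add_nonneg (by linarith) (mul_nonneg (sq_nonneg _) (by linarith)))
  -- `B² (2B - kX) ≥ 2B³ - (2B - 1) k` by `hreg`.
  have hg : 0 ≤ 2 * B - X * k := by nlinarith [mul_le_mul_of_nonneg_right hreg hk.le]
  linarith [mul_nonneg (mul_pos (sub_pos.2 hB) hX).le hg]

noncomputable def crossoverThreshold (b c x : ℝ) : ℝ :=
  2 * exp (-b * x) - 1 + (1 - exp (-b * x) ^ 2) * exp (-c * x)

section CrossoverThreshold

variable {a b c μ x : ℝ}

lemma hitProb_sub_hitProb_add (a b c μ : ℝ) :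
    hitProb μ c a - hitProb μ (b + c) 0 =
      exp (-c * μ) * (crossoverThreshold b c μ - exp (-a * μ)) := by
  rw [hitProb, hitProb, crossoverThreshold, show -μ * (b + c) = -b * μ + -c * μ by ring,
    exp_add, show -μ * c = -c * μ by ring, show -μ * a = -a * μ by ring, mul_zero, exp_zero]
  ring

lemma zero_le_hitProb_sub_hitProb_add_iff (a b c μ : ℝ) :
    0 ≤ hitProb μ c a - hitProb μ (b + c) 0 ↔
      exp (-a * μ) ≤ crossoverThreshold b c μ := by
  rw [hitProb_sub_hitProb_add, mul_nonneg_iff_of_pos_left (exp_pos _), sub_nonneg]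

lemma crossoverThreshold_sub_exp (b c x : ℝ) :
    crossoverThreshold b c x - exp (-c * x) =
      2 * exp (-b * x) - 1 - exp (-b * x) ^ 2 * exp (-c * x) := by
  rw [crossoverThreshold]; ring

lemma exp_le_crossoverThreshold_of_le {x' : ℝ} (hx' : 0 < x') (hx : x' ≤ x)
    (h : exp (-c * x) ≤ crossoverThreshold b c x) :
    exp (-c * x') ≤ crossoverThreshold b c x' := by
  set t := x' / x
  have ht₀ : 0 ≤ t := div_nonneg hx'.le (hx'.trans_le hx).le
  have ht₁ : t ≤ 1 := div_le_one_of_le₀ hx (hx'.trans_le hx).le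
  have hpow (d : ℝ) : exp (-d * x') = exp (-d * x) ^ t := by
    rw [← exp_mul, mul_assoc, mul_div_cancel₀ _ (hx'.trans_le hx).ne']
  have hreg := crossoverThreshold_sub_exp b c x ▸ sub_nonneg.2 h
  have hhalf : 1 / 2 ≤ exp (-b * x) := by nlinarith [exp_pos (-b * x), exp_pos (-c * x)]
  rw [← sub_nonneg, crossoverThreshold_sub_exp, hpow, hpow, sub_nonneg,
    rpow_pow_comm (exp_pos _).le, ← mul_rpow (by positivity) (exp_pos _).le]
  calc (exp (-b * x) ^ 2 * exp (-c * x)) ^ t ≤ (2 * exp (-b * x) - 1) ^ t :=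
        rpow_le_rpow (by positivity) (by linarith) ht₀
    _ ≤ 2 * exp (-b * x) ^ t - 1 := two_mul_sub_one_rpow_le hhalf ht₀ ht₁

lemma hasDerivAt_crossoverThreshold (b c x : ℝ) :
    HasDerivAt (crossoverThreshold b c)
      (-2 * b * exp (-b * x) * (1 - exp (-b * x) * exp (-c * x))
        - c * (1 - exp (-b * x) ^ 2) * exp (-c * x)) x := by
  have hexp (d : ℝ) : HasDerivAt (fun x => exp (-d * x)) (exp (-d * x) * -d) x := by
    simpa using ((hasDerivAt_id' x).const_mul (-d)).exp
  have h := (((hexp b).const_mul 2).sub_const 1).add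
    ((((hexp b).pow 2).const_sub 1).mul (hexp c))
  exact h.congr_deriv (by simp only [Pi.pow_apply]; push_cast; ring)

lemma mul_deriv_crossoverThreshold_lt (hb : 0 < b) (hx : 0 < x)
    (hreg : exp (-c * x) ≤ crossoverThreshold b c x) :
    x * deriv (crossoverThreshold b c) x <
      crossoverThreshold b c x * log (crossoverThreshold b c x) := by
  rw [(hasDerivAt_crossoverThreshold b c x).deriv]
  have hreg' := crossoverThreshold_sub_exp b c x ▸ sub_nonneg.2 hreg
  set B := exp (-b * x)
  set X := exp (-c * x)
  set Y := crossoverThreshold b c x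
  have hY_eq : Y = 2 * B - 1 + (1 - B ^ 2) * X := rfl
  have hB₀ : 0 < B := exp_pos _
  have hX₀ : 0 < X := exp_pos _
  have hB : 1 - B < b * x := by linarith [add_one_lt_exp (x := -b * x) (by nlinarith)]
  have hX : 1 - X ≤ c * x := by linarith [add_one_le_exp (-c * x)]
  have hB₁ : B < 1 := exp_lt_one_iff.2 (by nlinarith)
  have hX₁ : X ≤ 1 := by nlinarith [sq_nonneg (1 - B), mul_pos hB₀ hB₀]
  have hY₀ : 0 < Y := by linarith
  have hY₁ : Y ≤ 1 := by
    nlinarith [mul_nonneg (sub_pos.2 hB₁).le (by nlinarith : (0 : ℝ) ≤ 2 - X - B * X)]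
  calc x * (-2 * b * B * (1 - B * X) - c * (1 - B ^ 2) * X)
      = -(2 * (b * x) * B * (1 - B * X) + (c * x) * (1 - B ^ 2) * X) := by ring
    _ < -(2 * (1 - B) * B * (1 - B * X) + (1 - X) * (1 - B ^ 2) * X) := by
        have hBX : 0 < 1 - B * X := by nlinarith
        nlinarith [mul_pos (sub_pos.2 hB) (mul_pos hB₀ hBX),
          mul_nonneg (sub_nonneg.2 hX) (mul_pos (by nlinarith : 0 < 1 - B ^ 2) hX₀).le]
    _ ≤ -((1 - Y ^ 2) / 2) :=
        neg_le_neg (hY_eq ▸ one_sub_sq_div_two_le hB₁ hX₀ (by linarith))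
    _ ≤ Y * log Y := by
        have := negMulLog_le_one_sub_sq_div_two hY₀ hY₁
        rw [negMulLog, neg_mul] at this
        linarith

lemma strictAntiOn_log_crossoverThreshold_div (hb : 0 < b)
    (hμ : exp (-c * μ) ≤ crossoverThreshold b c μ) :
    StrictAntiOn (fun x => log (crossoverThreshold b c x) / x) (Ioc 0 μ) := by
  have hreg {x} (hx : x ∈ Ioc 0 μ) : exp (-c * x) ≤ crossoverThreshold b c x :=
    exp_le_crossoverThreshold_of_le hx.1 hx.2 hμ
  have hpos {x} (hx : x ∈ Ioc 0 μ) : 0 < crossoverThreshold b c x :=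
    (exp_pos _).trans_le (hreg hx)
  have hdiff {x} (hx : x ∈ Ioc 0 μ) :=
    (hasDerivAt_crossoverThreshold b c x).differentiableAt
  refine strictAntiOn_of_deriv_neg (convex_Ioc 0 μ) (fun x hx => ?_) fun x hx => ?_
  · exact (((hdiff hx).continuousAt.log (hpos hx).ne').div continuousAt_id
      hx.1.ne').continuousWithinAt
  rw [interior_Ioc] at hx
  have hx' : x ∈ Ioc 0 μ := Ioo_subset_Ioc_self hx
  rw [deriv_fun_div ((hdiff hx').log (hpos hx').ne') differentiableAt_fun_id hx.1.ne',
    deriv_id'', deriv.log (hdiff hx') (hpos hx').ne']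
  have hnum : deriv (crossoverThreshold b c) x / crossoverThreshold b c x * x
      - log (crossoverThreshold b c x) * 1 < 0 := by
    rw [mul_one, sub_neg, div_mul_eq_mul_div, div_lt_iff₀ (hpos hx'),
      mul_comm (deriv _ x), mul_comm (log _)]
    exact mul_deriv_crossoverThreshold_lt hb hx.1 (hreg hx')
  exact div_neg_of_neg_of_pos hnum (pow_pos hx.1 2)

lemma hitProb_sub_hitProb_add_nonneg_of_le {μ' : ℝ} (hb : 0 < b) (hac : a ≤ c)
    (hμ' : 0 < μ') (hμ'μ : μ' ≤ μ) (h : 0 ≤ hitProb μ c a - hitProb μ (b + c) 0) :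
    0 ≤ hitProb μ' c a - hitProb μ' (b + c) 0 := by
  rw [zero_le_hitProb_sub_hitProb_add_iff] at h ⊢
  have hμ := hμ'.trans_le hμ'μ
  have hreg : exp (-c * μ) ≤ crossoverThreshold b c μ :=
    (exp_le_exp.2 (by nlinarith)).trans h
  have hY' := (exp_pos _).trans_le (exp_le_crossoverThreshold_of_le hμ' hμ'μ hreg)
  have hanti := (strictAntiOn_log_crossoverThreshold_div hb hreg).antitoneOn
    ⟨hμ', hμ'μ⟩ ⟨hμ, le_rfl⟩ hμ'μ
  have hlog : -a ≤ log (crossoverThreshold b c μ) / μ := by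
    rw [le_div_iff₀ hμ]
    exact (le_log_iff_exp_le ((exp_pos _).trans_le h)).2 h
  rw [← le_log_iff_exp_le hY', ← le_div_iff₀ hμ']
  exact hlog.trans hanti

end CrossoverThreshold

lemma Fin.exists_iff_lt_of_antitone {K : ℕ} (P : Fin K → Prop) (hP : Antitone P) :
    ∃ n ≤ K, ∀ c : Fin K, P c ↔ (c : ℕ) < n := by
  classical
  let Q n := ∀ c : Fin K, (c : ℕ) < n → P c
  refine ⟨Nat.findGreatest Q K, Nat.findGreatest_le K,
    fun c => ⟨fun hc => ?_, fun hc => ?_⟩⟩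
  · exact Nat.lt_of_succ_le <| Nat.le_findGreatest c.isLt fun j hj =>
      hP (Fin.le_def.2 (Nat.lt_succ_iff.1 hj)) hc
  · exact Nat.findGreatest_spec (P := Q) (Nat.zero_le K)
      (fun _ h => absurd h (Nat.not_lt_zero _)) c hc

theorem hit_rate_difference_single_crossover_general (K : ℕ)
    (lam : Fin K → ℝ) (hpos : ∀ c, 0 < lam c)
    (hsorted : ∀ i j : Fin K, i ≤ j → lam j ≤ lam i)
    (θhat θhats θ : ℝ) (h2 : θhats ≤ θhat) (h3 : θhat < θ) :
    ∃ cstar : ℕ, cstar ≤ K ∧ ∀ c : Fin K,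
      ((c : ℕ) < cstar → hitProb (lam c) θhat θhats - hitProb (lam c) θ 0 < 0) ∧
      (cstar ≤ (c : ℕ) → 0 ≤ hitProb (lam c) θhat θhats - hitProb (lam c) θ 0) := by
  obtain ⟨b, hb, rfl⟩ : ∃ b, 0 < b ∧ θ = b + θhat :=
    ⟨θ - θhat, sub_pos.2 h3, by ring⟩
  obtain ⟨n, hnK, hn⟩ := Fin.exists_iff_lt_of_antitone
    (fun c => hitProb (lam c) θhat θhats - hitProb (lam c) (b + θhat) 0 < 0)
    fun i j hij => by
      simp only [← not_le, le_Prop_eq]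
      exact mt (hitProb_sub_hitProb_add_nonneg_of_le hb h2 (hpos j) (hsorted i j hij))
  exact ⟨n, hnK, fun c => ⟨(hn c).2, fun hc => not_lt.1 fun h => hc.not_gt ((hn c).1 h)⟩⟩

/-- with rates `λ₁ ≥ … ≥ λ_K > 0` and TTLs `0 < θ̂ˢ ≤ θ̂ < θ`, the hit-rate
differences `Δ_c = h(λ_c, θ̂, θ̂ˢ) - h(λ_c, θ, 0)` change sign exactly once: there is a
crossover index `c*` with `Δ_c < 0` for the `c*` most popular objects and `Δ_c ≥ 0` for the
rest. -/
theorem hit_rate_difference_single_crossover (K : ℕ) (hK : 1 ≤ K)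
    (lam : Fin K → ℝ) (hpos : ∀ c, 0 < lam c)
    (hsorted : ∀ i j : Fin K, i ≤ j → lam j ≤ lam i)
    (θhat θhats θ : ℝ) (h1 : 0 < θhats) (h2 : θhats ≤ θhat) (h3 : θhat < θ) :
    ∃ cstar : ℕ, cstar ≤ K ∧ ∀ c : Fin K,
      ((c : ℕ) < cstar → hitProb (lam c) θhat θhats - hitProb (lam c) θ 0 < 0) ∧
      (cstar ≤ (c : ℕ) → 0 ≤ hitProb (lam c) θhat θhats - hitProb (lam c) θ 0) :=
  hit_rate_difference_single_crossover_general K lam hpos hsorted θhat θhats θ h2 h3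
end

section
/- (Lemma 1, byte hit rate version.) Let K ≥ 1, λ > 0, L > 0; let π₁ ≥ π₂ ≥ … ≥ π_K > 0 with α ≥ 0 and α + ∑_c π_c = 1, and set λ_c = λ·π_c. Let w₁ ≥ w₂ ≥ … ≥ w_K > 0 be the object sizes and w̄ > 0 the rare-object size. Define h(μ, a, b) = (1 − e^{−μa})² + e^{−μa}·(1 − e^{−μb}), the byte hit rate H_b(a, b) = (∑_c w_c·π_c·h(λ_c, a, b)) / (w̄·α + ∑_c w_c·π_c), and the normalized size S(a, b) = (∑_c w_c·h(λ_c, a, b) + w̄·α·λ·b) / (λ·(w̄·α + ∑_c w_c·π_c)). Suppose 0 < θ̂^s ≤ θ̂ ≤ L and 0 < θ ≤ L satisfy H_b(θ̂, θ̂^s) = H_b(θ, 0). Then S(θ, 0) ≤ S(θ̂, θ̂^s); moreover, if α > 0 then S(θ, 0) < S(θ̂, θ̂^s). -/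
/-- Byte hit rate of the type under TTL pair `(a,b)`. -/
noncomputable def byteHitRate (K : ℕ) (lam0 alpha wbar : ℝ) (pi w : Fin K → ℝ)
    (a b : ℝ) : ℝ :=
  (∑ c, w c * pi c * hitProb (lam0 * pi c) a b) / (wbar * alpha + ∑ c, w c * pi c)

/-- Normalized size of the type under TTL pair `(a,b)`. -/
noncomputable def normSize (K : ℕ) (lam0 alpha wbar : ℝ) (pi w : Fin K → ℝ)
    (a b : ℝ) : ℝ :=
  (∑ c, w c * hitProb (lam0 * pi c) a b + wbar * alpha * lam0 * b) /
    (lam0 * (wbar * alpha + ∑ c, w c * pi c))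

/-! Write `d(ν) = h(ν, θ̂, θ̂ˢ) - h(ν, θ, 0)` for the gain in hit probability of the cache
`(θ̂, θ̂ˢ)` over full filtering at request rate `ν`. If `θ ≤ θ̂` then `d ≥ 0`. Otherwise `d` crosses
zero at most once, from above: `d' < 0` at every positive zero of `d`. For `θ ≤ θ̂ + θ̂ˢ` this is an
estimate with `1 + u ≤ eᵘ`; for `θ ≥ θ̂ + θ̂ˢ`, `e^{2θν}(d' + (θ̂ + θ̂ˢ) d)` is strictly decreasing
and vanishes before any positive zero of `d` by Rolle's theorem. Equal byte hit rates mean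
`∑ w_c λ_c d(λ_c) = 0`, and single crossing turns this into `∑ w_c d(λ_c) ≥ 0`: the recurring
objects occupy no more space under full filtering, while the rare objects add `w̄ α λ θ̂ˢ` to the
size of the cache `(θ̂, θ̂ˢ)`. -/

open Real Finset

/-- Both sums are compared with `p* ∑ e`, where `p*` is the smallest `p i` with `e i < 0`. -/
lemma sum_nonneg_of_sum_mul_nonneg_of_single_crossing {ι : Type*} (s : Finset ι) (p e : ι → ℝ)
    (hp : ∀ i ∈ s, 0 < p i) (hcross : ∀ i ∈ s, ∀ j ∈ s, p i ≤ p j → e i < 0 → e j ≤ 0)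
    (hsum : 0 ≤ ∑ i ∈ s, p i * e i) : 0 ≤ ∑ i ∈ s, e i := by
  by_cases hneg : ∃ i ∈ s, e i < 0
  swap
  · push Not at hneg
    exact sum_nonneg hneg
  obtain ⟨k, hk, hmin⟩ := (s.filter (e · < 0)).exists_min_image p (by simpa [Finset.Nonempty])
  rw [mem_filter] at hk
  have hle : ∀ i ∈ s, p i * e i ≤ p k * e i := by
    intro i hi
    rcases lt_trichotomy (e i) 0 with hi_neg | hi_zero | hi_pos
    · exact mul_le_mul_of_nonpos_right (hmin i (mem_filter.mpr ⟨hi, hi_neg⟩)) hi_neg.le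
    · simp [hi_zero]
    · refine mul_le_mul_of_nonneg_right ?_ hi_pos.le
      by_contra! hki
      exact hi_pos.not_ge (hcross k hk.1 i hi hki.le hk.2)
  have : 0 ≤ p k * ∑ i ∈ s, e i := by
    rw [mul_sum]
    exact hsum.trans (sum_le_sum hle)
  exact nonneg_of_mul_nonneg_right this (hp k hk.1)

lemma mul_exp_neg_le_one_sub_exp_neg (u : ℝ) : u * exp (-u) ≤ 1 - exp (-u) := by
  have h := mul_le_mul_of_nonneg_right (add_one_le_exp u) (exp_pos (-u)).le
  rw [← exp_add, add_neg_cancel, exp_zero] at h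
  linarith

noncomputable def hitGap (a b c ν : ℝ) : ℝ := hitProb ν a b - hitProb ν c 0

noncomputable def hitGapDeriv (a b c ν : ℝ) : ℝ :=
  -2 * a * exp (-ν * a) ^ 2 + a * exp (-ν * a) + (a + b) * (exp (-ν * a) * exp (-ν * b))
    - 2 * c * exp (-ν * c) + 2 * c * exp (-ν * c) ^ 2

lemma hitGap_eq (a b c ν : ℝ) :
    hitGap a b c ν = exp (-ν * a) ^ 2 - exp (-ν * a) - exp (-ν * a) * exp (-ν * b)
      + 2 * exp (-ν * c) - exp (-ν * c) ^ 2 := by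
  simp only [hitGap, hitProb, mul_zero, exp_zero]
  ring

lemma hitGap_zero (a b c : ℝ) : hitGap a b c 0 = 0 := by
  norm_num [hitGap_eq]

lemma hasDerivAt_exp_neg_mul (k ν : ℝ) :
    HasDerivAt (fun t ↦ exp (-t * k)) (-k * exp (-ν * k)) ν := by
  convert ((hasDerivAt_neg ν).mul_const k).exp using 1
  ring

lemma hasDerivAt_hitGap (a b c ν : ℝ) :
    HasDerivAt (hitGap a b c) (hitGapDeriv a b c ν) ν := by
  have ha := hasDerivAt_exp_neg_mul a ν
  have hb := hasDerivAt_exp_neg_mul b ν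
  have hc := hasDerivAt_exp_neg_mul c ν
  rw [show hitGap a b c = _ from funext (hitGap_eq a b c)]
  refine (((((ha.fun_pow 2).fun_sub ha).fun_sub (ha.fun_mul hb)).fun_add (hc.const_mul 2)).fun_sub
    (hc.fun_pow 2)).congr_deriv ?_
  simp only [hitGapDeriv]
  push_cast
  ring

lemma hitProb_le_hitProb {ν a b c : ℝ} (hν : 0 ≤ ν) (hc : 0 ≤ c) (hca : c ≤ a) (hb : 0 ≤ b) :
    hitProb ν c 0 ≤ hitProb ν a b := by
  have hxz : exp (-ν * a) ≤ exp (-ν * c) := exp_le_exp.mpr (by nlinarith)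
  have hz : exp (-ν * c) ≤ 1 := exp_le_one_iff.mpr (by nlinarith)
  have hy : exp (-ν * b) ≤ 1 := exp_le_one_iff.mpr (by nlinarith)
  have hx := exp_pos (-ν * a)
  simp only [hitProb, mul_zero, exp_zero, sub_self, add_zero]
  nlinarith [mul_nonneg hx.le (sub_nonneg.mpr hy)]

lemma hitGapDeriv_neg_of_le_add {a b c ν : ℝ} (ha : 0 ≤ a) (hac : a < c) (hcab : c ≤ a + b)
    (hν : 0 < ν) (h0 : hitGap a b c ν = 0) : hitGapDeriv a b c ν < 0 := by
  rw [hitGap_eq] at h0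
  unfold hitGapDeriv
  set x := exp (-ν * a) with hx
  set y := exp (-ν * b) with hy
  set z := exp (-ν * c) with hz
  have hx0 : 0 < x := exp_pos _
  have hz0 : 0 < z := exp_pos _
  have hzx : z < x := exp_lt_exp.mpr (by nlinarith)
  have hxyz : x * y = z * exp (-(ν * (a + b - c))) := by
    simp only [hx, hy, hz, ← exp_add]; ring_nf
  have hxz : z = x * exp (-(ν * (c - a))) := by
    simp only [hx, hz, ← exp_add]; ring_nf
  have hfactor : (x - z) * (1 - x - z) = z - x * y := by linear_combination -h0
  have hxy_le : x * y ≤ z := by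
    rw [hxyz]
    exact mul_le_of_le_one_right hz0.le (exp_le_one_iff.mpr (by nlinarith))
  have hsum_le : 0 ≤ 1 - x - z := by
    by_contra! hneg
    nlinarith [mul_neg_of_pos_of_neg (sub_pos.mpr hzx) hneg]
  have hlow : ν * (a + b - c) * (x * y) ≤ z - x * y := by
    have := mul_le_mul_of_nonneg_left (mul_exp_neg_le_one_sub_exp_neg (ν * (a + b - c))) hz0.le
    rw [hxyz]; linarith
  have hup : x - z ≤ ν * (c - a) * x := by
    have := mul_le_mul_of_nonneg_left (one_sub_le_exp_neg (ν * (c - a))) hx0.le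
    rw [hxz]; linarith
  have hcompare : (a + b - c) * (x * y) ≤ (c - a) * (x * (1 - x - z)) := by
    refine le_of_mul_le_mul_left ?_ hν
    nlinarith [mul_le_mul_of_nonneg_right hup hsum_le]
  have hpos : 0 < (x - z) * (a * x + c * z) := by
    have : 0 < c * z := mul_pos (ha.trans_lt hac) hz0
    exact mul_pos (sub_pos.mpr hzx) (by nlinarith)
  nlinarith

lemma strictAnti_exp_sq_mul_hitGapDeriv_add {a b c : ℝ} (hb : 0 < b) (hba : b ≤ a)
    (hcab : a + b ≤ c) :
    StrictAnti fun t ↦ exp (c * t) ^ 2 * (hitGapDeriv a b c t + (a + b) * hitGap a b c t) := by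
  have hform : ∀ t, exp (c * t) ^ 2 * (hitGapDeriv a b c t + (a + b) * hitGap a b c t) =
      (b - a) * exp ((c - a) * t) ^ 2 - b * (exp ((c - a) * t) * exp (c * t))
        - 2 * (c - a - b) * exp (c * t) + (2 * c - a - b) := by
    intro t
    have hxu : exp (-t * a) * exp (c * t) = exp ((c - a) * t) := by rw [← exp_add]; ring_nf
    have hzu : exp (-t * c) * exp (c * t) = 1 := by rw [← exp_add]; ring_nf; exact exp_zero
    rw [hitGapDeriv, hitGap_eq]
    linear_combination ((b - a) * (exp (-t * a) * exp (c * t) + exp ((c - a) * t))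
        - b * exp (c * t)) * hxu
      + (-2 * (c - a - b) * exp (c * t) + (2 * c - a - b) * (exp (-t * c) * exp (c * t) + 1)) * hzu
  intro s t hst
  simp only [hform]
  have hr : exp ((c - a) * s) ≤ exp ((c - a) * t) := exp_le_exp.mpr (by nlinarith)
  have hu : exp (c * s) < exp (c * t) := exp_lt_exp.mpr (by nlinarith)
  have hr0 := exp_pos ((c - a) * s)
  have hu0 := exp_pos (c * s)
  nlinarith [mul_le_mul hr hr hr0.le (hr0.trans_le hr).le,
    mul_lt_mul' hr hu hu0.le (hr0.trans_le hr)]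

/-- Rolle's theorem applied to `e^{(a+b)t} hitGap t` between `0` and `ν` produces a zero of the
strictly decreasing function of `strictAnti_exp_sq_mul_hitGapDeriv_add` before `ν`. -/
lemma hitGapDeriv_neg_of_add_le {a b c ν : ℝ} (hb : 0 < b) (hba : b ≤ a) (hcab : a + b ≤ c)
    (hν : 0 < ν) (h0 : hitGap a b c ν = 0) : hitGapDeriv a b c ν < 0 := by
  have hderiv : ∀ t, HasDerivAt (fun t ↦ exp ((a + b) * t) * hitGap a b c t)
      (exp ((a + b) * t) * (hitGapDeriv a b c t + (a + b) * hitGap a b c t)) t := fun t ↦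
    (((hasDerivAt_id t).const_mul (a + b)).exp.mul (hasDerivAt_hitGap a b c t)).congr_deriv
      (by simp only [id, mul_one]; ring)
  obtain ⟨s, hs, hs0⟩ := exists_hasDerivAt_eq_zero hν
    (fun t _ ↦ (hderiv t).continuousAt.continuousWithinAt) (by simp [hitGap_zero, h0])
    (fun t _ ↦ hderiv t)
  have hGs : hitGapDeriv a b c s + (a + b) * hitGap a b c s = 0 :=
    (mul_eq_zero.mp hs0).resolve_left (exp_pos _).ne'
  have := strictAnti_exp_sq_mul_hitGapDeriv_add hb hba hcab hs.2
  simp only [hGs, h0, mul_zero, add_zero] at this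
  exact neg_of_mul_neg_right this (sq_nonneg _)

lemma hitGapDeriv_neg_of_hitGap_eq_zero {a b c ν : ℝ} (hb : 0 < b) (hba : b ≤ a) (hac : a < c)
    (hν : 0 < ν) (h0 : hitGap a b c ν = 0) : hitGapDeriv a b c ν < 0 := by
  rcases le_total c (a + b) with hcab | hcab
  · exact hitGapDeriv_neg_of_le_add (hb.le.trans hba) hac hcab hν h0
  · exact hitGapDeriv_neg_of_add_le hb hba hcab hν h0

lemma hitGap_nonpos_of_neg {a b c ν₁ ν₂ : ℝ} (hb : 0 < b) (hba : b ≤ a) (hc : 0 ≤ c)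
    (hν₁ : 0 < ν₁) (hle : ν₁ ≤ ν₂) (hneg : hitGap a b c ν₁ < 0) : hitGap a b c ν₂ ≤ 0 := by
  rcases le_or_gt c a with hca | hac
  · exact absurd hneg (sub_nonneg.mpr (hitProb_le_hitProb hν₁.le hc hca hb.le)).not_gt
  · refine image_le_of_deriv_right_lt_deriv_boundary (f' := hitGapDeriv a b c) (B' := 0)
      (fun t _ ↦ (hasDerivAt_hitGap a b c t).continuousAt.continuousWithinAt)
      (fun t _ ↦ (hasDerivAt_hitGap a b c t).hasDerivWithinAt) hneg.le
      (fun t ↦ hasDerivAt_const t 0) ?_ ⟨hle, le_rfl⟩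
    exact fun t ht h0 ↦ hitGapDeriv_neg_of_hitGap_eq_zero hb hba hac (hν₁.trans_le ht.1) h0

lemma sum_mul_hitProb_le_of_weighted_hits_eq {ι : Type*} (s : Finset ι) (ν w : ι → ℝ)
    {a b c : ℝ} (hν : ∀ i ∈ s, 0 < ν i) (hw : ∀ i ∈ s, 0 < w i) (hb : 0 < b) (hba : b ≤ a)
    (hc : 0 ≤ c)
    (hhits : ∑ i ∈ s, w i * ν i * hitProb (ν i) a b = ∑ i ∈ s, w i * ν i * hitProb (ν i) c 0) :
    ∑ i ∈ s, w i * hitProb (ν i) c 0 ≤ ∑ i ∈ s, w i * hitProb (ν i) a b := by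
  have hweighted : ∑ i ∈ s, ν i * (w i * hitGap a b c (ν i)) = 0 := by
    rw [← sub_eq_zero.mpr hhits, ← sum_sub_distrib]
    exact sum_congr rfl fun i _ ↦ by rw [hitGap]; ring
  have := sum_nonneg_of_sum_mul_nonneg_of_single_crossing s ν
    (fun i ↦ w i * hitGap a b c (ν i)) hν
    (fun i hi j hj hij hneg ↦ mul_nonpos_of_nonneg_of_nonpos (hw j hj).le
      (hitGap_nonpos_of_neg hb hba hc (hν i hi) hij (neg_of_mul_neg_right hneg (hw i hi).le)))
    hweighted.ge
  simpa only [hitGap, mul_sub, sum_sub_distrib, sub_nonneg] using this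

theorem full_filtering_minimizes_size_bhr_general (K : ℕ) (hK : 1 ≤ K)
    (lam0 : ℝ) (hlam0 : 0 < lam0)
    (pi w : Fin K → ℝ) (wbar alpha : ℝ)
    (hpi_pos : ∀ c, 0 < pi c)
    (hw_pos : ∀ c, 0 < w c)
    (hwbar : 0 < wbar) (halpha : 0 ≤ alpha)
    (θhat θhats θ : ℝ)
    (h1 : 0 < θhats) (h2 : θhats ≤ θhat) (h4 : 0 < θ)
    (heq : byteHitRate K lam0 alpha wbar pi w θhat θhats
      = byteHitRate K lam0 alpha wbar pi w θ 0) :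
    normSize K lam0 alpha wbar pi w θ 0 ≤ normSize K lam0 alpha wbar pi w θhat θhats ∧
    (0 < alpha →
      normSize K lam0 alpha wbar pi w θ 0 < normSize K lam0 alpha wbar pi w θhat θhats) := by
  have hD : 0 < wbar * alpha + ∑ c, w c * pi c := add_pos_of_nonneg_of_pos (by positivity)
    (sum_pos (fun c _ ↦ mul_pos (hw_pos c) (hpi_pos c)) ⟨⟨0, hK⟩, mem_univ _⟩)
  have hrate : ∀ a b, ∑ c, w c * (lam0 * pi c) * hitProb (lam0 * pi c) a b
      = lam0 * ∑ c, w c * pi c * hitProb (lam0 * pi c) a b := fun a b ↦ by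
    rw [mul_sum]
    exact sum_congr rfl fun c _ ↦ by ring
  have hrecurring := sum_mul_hitProb_le_of_weighted_hits_eq univ (fun c ↦ lam0 * pi c) w
    (fun c _ ↦ mul_pos hlam0 (hpi_pos c)) (fun c _ ↦ hw_pos c) h1 h2 h4.le
    (by rw [hrate, hrate, (div_left_inj' hD.ne').mp heq])
  have hrare : 0 ≤ wbar * alpha * lam0 * θhats := by positivity
  refine ⟨div_le_div_of_nonneg_right (by linarith) (by positivity),
    fun hα ↦ div_lt_div_of_pos_right ?_ (by positivity)⟩
  have : 0 < wbar * alpha * lam0 * θhats := by positivity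
  linarith

/-- Lemma 1, byte hit rate version: if the full-filtering cache `(θ, 0)`
achieves the same byte hit rate as the cache `(θ̂, θ̂ˢ)` with `θ̂ˢ > 0`, then its
normalized size is no larger, and strictly smaller when rare objects are present (`α > 0`). -/
theorem full_filtering_minimizes_size_bhr (K : ℕ) (hK : 1 ≤ K)
    (lam0 L : ℝ) (hlam0 : 0 < lam0) (hL : 0 < L)
    (pi w : Fin K → ℝ) (wbar alpha : ℝ)
    (hpi_pos : ∀ c, 0 < pi c) (hpi_sorted : ∀ i j : Fin K, i ≤ j → pi j ≤ pi i)
    (hw_pos : ∀ c, 0 < w c) (hw_sorted : ∀ i j : Fin K, i ≤ j → w j ≤ w i)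
    (hwbar : 0 < wbar) (halpha : 0 ≤ alpha) (hprob : alpha + ∑ c, pi c = 1)
    (θhat θhats θ : ℝ)
    (h1 : 0 < θhats) (h2 : θhats ≤ θhat) (h3 : θhat ≤ L) (h4 : 0 < θ) (h5 : θ ≤ L)
    (heq : byteHitRate K lam0 alpha wbar pi w θhat θhats
      = byteHitRate K lam0 alpha wbar pi w θ 0) :
    normSize K lam0 alpha wbar pi w θ 0 ≤ normSize K lam0 alpha wbar pi w θhat θhats ∧
    (0 < alpha →
      normSize K lam0 alpha wbar pi w θ 0 < normSize K lam0 alpha wbar pi w θhat θhats) :=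
  full_filtering_minimizes_size_bhr_general K hK lam0 hlam0 pi w wbar alpha hpi_pos hw_pos hwbar
    halpha θhat θhats θ h1 h2 h4 heq
end

section
/- (Concrete form of Lemma 6.) Let β > 1, K ≥ 1, Z = ∑_{k=1}^{K} k^{−β}, λ > 0, q ∈ (0, 1], α ≥ 0, and set λ_c = λ·q·Z^{−1}·c^{−β} for c = 1, …, K. Define the d-TTL hit rate of the type with fixed TTL θ as h(θ) = (q/(α + q)) · ∑_{c=1}^{K} Z^{−1}·c^{−β}·(1 − e^{−λ_c θ}). Let r ∈ (0, 1) and δ ∈ (0, r), and set M = ⌈(δ·Z·(β − 1))^{−1/(β−1)}⌉. If M ≤ K, then with L = ln(1/(r − δ)) / λ_M one has h(L) ≥ (q/(α + q))·(1 − r). -/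
open Finset

/-- The normalizing constant of the Zipfian distribution with parameter `β` over `K` objects. -/
noncomputable def zipfZ (K : ℕ) (β : ℝ) : ℝ := ∑ k ∈ Finset.Icc 1 K, (k : ℝ) ^ (-β)

/-- The Poisson request rate of the `c`-th most popular recurring object:
`λ_c = λ q Z⁻¹ c^{-β}`. -/
noncomputable def zipfRate (K : ℕ) (β lam0 q : ℝ) (c : ℕ) : ℝ :=
  lam0 * q * (zipfZ K β)⁻¹ * (c : ℝ) ^ (-β)

/-- The stationary hit rate of the type for the d-TTL cache with fixed TTL `θ`. -/
noncomputable def dTTLhitRate (K : ℕ) (β lam0 q alpha : ℝ) (θ : ℝ) : ℝ :=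
  (q / (alpha + q)) * ∑ c ∈ Finset.Icc 1 K,
    (zipfZ K β)⁻¹ * (c : ℝ) ^ (-β) * (1 - Real.exp (-(zipfRate K β lam0 q c) * θ))

/-! Choose `M` so that the Zipf tail beyond `M` carries mass at most `δ`: comparing
`∑_{c > M} c^{-β}` with `∫_M^∞ x^{-β} dx = M^{1-β}/(β-1)` shows that
`M ≥ (δ Z (β-1))^{-1/(β-1)}` suffices. The TTL `L` makes the miss probability `e^{-λ_M L}` of
object `M` exactly `r - δ`, and the more popular objects `c ≤ M` miss even less often, so the hit
probability of the recurring traffic is at least `(1 - (r - δ))(1 - δ) ≥ 1 - r`. -/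

open Real

theorem zipfZ_pos {K : ℕ} (hK : 1 ≤ K) (β : ℝ) : 0 < zipfZ K β :=
  sum_pos (fun k hk => rpow_pos_of_pos (by exact_mod_cast (mem_Icc.1 hk).1) _)
    ⟨1, mem_Icc.2 ⟨le_rfl, hK⟩⟩

theorem zipfZ_eq_sum_Icc_add_sum_Ioc {K M : ℕ} (hMK : M ≤ K) (β : ℝ) :
    zipfZ K β = ∑ c ∈ Icc 1 M, (c : ℝ) ^ (-β) + ∑ c ∈ Ioc M K, (c : ℝ) ^ (-β) := by
  have hIcc : ∀ n : ℕ, Icc 1 n = Ioc 0 n := Icc_add_one_left_eq_Ioc 0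
  rw [zipfZ, hIcc, hIcc, sum_Ioc_consecutive _ M.zero_le hMK]

theorem sum_Ioc_rpow_neg_le {β : ℝ} (hβ : 1 < β) {M : ℕ} (hM : 0 < M) (K : ℕ) :
    ∑ c ∈ Ioc M K, (c : ℝ) ^ (-β) ≤ (M : ℝ) ^ (1 - β) / (β - 1) := by
  have hβ1 : 0 < β - 1 := by linarith
  obtain hKM | hMK := lt_or_ge K M
  · rw [Ioc_eq_empty_of_le hKM.le, sum_empty]; positivity
  have hMpos : (0 : ℝ) < M := by exact_mod_cast hM
  have hanti : AntitoneOn (fun x : ℝ => x ^ (-β)) (Set.Icc (M : ℝ) K) := fun x hx y _ hxy =>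
    rpow_le_rpow_of_nonpos (hMpos.trans_le hx.1) hxy (by linarith)
  calc ∑ c ∈ Ioc M K, (c : ℝ) ^ (-β) = ∑ i ∈ Ico M K, ((i + 1 : ℕ) : ℝ) ^ (-β) := by
        rw [← Ico_add_one_add_one_eq_Ioc, ← sum_Ico_add']
    _ ≤ ∫ x in (M : ℝ)..K, x ^ (-β) := hanti.sum_le_integral_Ico hMK
    _ = ((M : ℝ) ^ (1 - β) - (K : ℝ) ^ (1 - β)) / (β - 1) := by
        rw [integral_rpow (Or.inr ⟨by linarith, Set.notMem_uIcc_of_lt hMpos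
          (hMpos.trans_le (by exact_mod_cast hMK))⟩)]
        rw [div_eq_div_iff (by linarith) hβ1.ne', neg_add_eq_sub]; ring
    _ ≤ (M : ℝ) ^ (1 - β) / (β - 1) := by gcongr; exact sub_le_self _ (by positivity)

theorem rpow_one_sub_div_le {β x y : ℝ} (hβ : 1 < β) (hx : 0 < x)
    (hy : (x * (β - 1)) ^ (-1 / (β - 1)) ≤ y) : y ^ (1 - β) / (β - 1) ≤ x := by
  have hβ1 : 0 < β - 1 := by linarith
  rw [div_le_iff₀ hβ1]
  calc y ^ (1 - β) ≤ ((x * (β - 1)) ^ (-1 / (β - 1))) ^ (1 - β) :=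
        rpow_le_rpow_of_nonpos (by positivity) hy (by linarith)
    _ = x * (β - 1) := by
        rw [← rpow_mul (by positivity), show -1 / (β - 1) * (1 - β) = 1 by field_simp; ring,
          rpow_one]

theorem sum_Ioc_ceil_rpow_neg_le {β x : ℝ} (hβ : 1 < β) (hx : 0 < x) (K : ℕ) :
    ∑ c ∈ Ioc ⌈(x * (β - 1)) ^ (-1 / (β - 1))⌉₊ K, (c : ℝ) ^ (-β) ≤ x := by
  have hβ1 : 0 < β - 1 := by linarith
  refine (sum_Ioc_rpow_neg_le hβ (Nat.ceil_pos.2 (by positivity)) K).trans ?_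
  exact rpow_one_sub_div_le hβ hx (Nat.le_ceil _)

theorem one_sub_le_sum_Icc_zipf {β δ : ℝ} (hβ : 1 < β) (hδ : 0 < δ) {K : ℕ} (hK : 1 ≤ K)
    {M : ℕ} (hM : M = ⌈(δ * zipfZ K β * (β - 1)) ^ (-(1 : ℝ) / (β - 1))⌉₊) (hMK : M ≤ K) :
    1 - δ ≤ ∑ c ∈ Icc 1 M, (zipfZ K β)⁻¹ * (c : ℝ) ^ (-β) := by
  have hZ := zipfZ_pos hK β
  have htail : ∑ c ∈ Ioc M K, (c : ℝ) ^ (-β) ≤ δ * zipfZ K β :=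
    hM ▸ sum_Ioc_ceil_rpow_neg_le hβ (by positivity) K
  rw [← mul_sum, ← div_eq_inv_mul, le_div_iff₀ hZ]
  linarith [zipfZ_eq_sum_Icc_add_sum_Ioc hMK β]

theorem zipfRate_le_zipfRate {K : ℕ} {β lam0 q : ℝ} (hβ : 0 ≤ β) (hlq : 0 ≤ lam0 * q)
    {c M : ℕ} (hc : 0 < c) (hcM : c ≤ M) : zipfRate K β lam0 q M ≤ zipfRate K β lam0 q c := by
  have hZ : 0 ≤ zipfZ K β := sum_nonneg fun k _ => rpow_nonneg k.cast_nonneg _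
  unfold zipfRate
  exact mul_le_mul_of_nonneg_left
    (rpow_le_rpow_of_nonpos (by exact_mod_cast hc) (by exact_mod_cast hcM) (by linarith))
    (by positivity)

theorem exp_neg_mul_log_inv_div_le {a b ε : ℝ} (ha : 0 < a) (hab : a ≤ b) (hε0 : 0 < ε)
    (hε1 : ε ≤ 1) : exp (-b * (log (1 / ε) / a)) ≤ ε := by
  have hlog : 0 ≤ log (1 / ε) / a := div_nonneg (log_nonneg (one_le_one_div hε0 hε1)) ha.le
  calc exp (-b * (log (1 / ε) / a)) ≤ exp (-a * (log (1 / ε) / a)) :=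
        exp_le_exp.2 (mul_le_mul_of_nonneg_right (neg_le_neg hab) hlog)
    _ = ε := by rw [neg_mul, mul_div_cancel₀ _ ha.ne', one_div, log_inv, neg_neg, exp_log hε0]

theorem one_sub_sub_le_sum_mul {ι : Type*} {s t : Finset ι} (hts : t ⊆ s) {p g : ι → ℝ}
    {ε δ : ℝ} (hε0 : 0 ≤ ε) (hε1 : ε ≤ 1) (hδ : 0 ≤ δ) (hpg : ∀ i ∈ s, 0 ≤ p i * g i)
    (hp : ∀ i ∈ t, 0 ≤ p i) (hg : ∀ i ∈ t, 1 - ε ≤ g i) (hmass : 1 - δ ≤ ∑ i ∈ t, p i) :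
    1 - ε - δ ≤ ∑ i ∈ s, p i * g i :=
  calc 1 - ε - δ ≤ (1 - ε) * (1 - δ) := by nlinarith
    _ ≤ (1 - ε) * ∑ i ∈ t, p i := mul_le_mul_of_nonneg_left hmass (by linarith)
    _ = ∑ i ∈ t, p i * (1 - ε) := by rw [mul_sum]; exact sum_congr rfl fun i _ => mul_comm _ _
    _ ≤ ∑ i ∈ t, p i * g i := sum_le_sum fun i hi => mul_le_mul_of_nonneg_left (hg i hi) (hp i hi)
    _ ≤ ∑ i ∈ s, p i * g i := sum_le_sum_of_subset_of_nonneg hts fun i hi _ => hpg i hi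

theorem zipf_ttl_tuning_general (β : ℝ) (hβ : 1 < β) (K : ℕ) (hK : 1 ≤ K)
    (lam0 q alpha r δ : ℝ) (hlam0 : 0 < lam0) (hq0 : 0 < q)
    (halpha : 0 ≤ alpha) (hr : r ∈ Set.Ioo (0 : ℝ) 1) (hδ : δ ∈ Set.Ioo (0 : ℝ) r)
    (M : ℕ) (hM : M = ⌈(δ * zipfZ K β * (β - 1)) ^ (-(1 : ℝ) / (β - 1))⌉₊)
    (hMK : M ≤ K)
    (L : ℝ) (hLdef : L = Real.log (1 / (r - δ)) / zipfRate K β lam0 q M) :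
    (q / (alpha + q)) * (1 - r) ≤ dTTLhitRate K β lam0 q alpha L := by
  obtain ⟨-, hr1⟩ := hr
  obtain ⟨hδ0, hδr⟩ := hδ
  have hZ := zipfZ_pos hK β
  have hM0 : 0 < M := hM ▸ Nat.ceil_pos.2 (by positivity)
  have hrate : ∀ c, 0 < c → 0 < zipfRate K β lam0 q c := fun c hc => by
    have : (0 : ℝ) < c := by exact_mod_cast hc
    unfold zipfRate; positivity
  have hL : 0 ≤ L := hLdef ▸ div_nonneg (log_nonneg (one_le_one_div (by linarith) (by linarith)))
    (hrate M hM0).le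
  have hsum : 1 - (r - δ) - δ ≤ ∑ c ∈ Icc 1 K,
      (zipfZ K β)⁻¹ * (c : ℝ) ^ (-β) * (1 - exp (-(zipfRate K β lam0 q c) * L)) := by
    refine one_sub_sub_le_sum_mul (p := fun c => (zipfZ K β)⁻¹ * (c : ℝ) ^ (-β))
      (Icc_subset_Icc_right hMK) (by linarith) (by linarith) hδ0.le ?_ (fun c _ => by positivity)
      ?_ (one_sub_le_sum_Icc_zipf hβ hδ0 hK hM hMK)
    · intro c hc
      have := hrate c (mem_Icc.1 hc).1
      exact mul_nonneg (by positivity) (sub_nonneg.2 (exp_le_one_iff.2 (by nlinarith)))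
    · intro c hc
      have := exp_neg_mul_log_inv_div_le (hrate M hM0)
        (zipfRate_le_zipfRate (by linarith) (by positivity) (mem_Icc.1 hc).1 (mem_Icc.1 hc).2)
        (by linarith : 0 < r - δ) (by linarith)
      rw [hLdef]; linarith
  unfold dTTLhitRate
  exact mul_le_mul_of_nonneg_left (by linarith) (by positivity)

/-- concrete form of Lemma 6: under Poisson arrivals with Zipfian popularity,
with `M = ⌈(δ Z (β-1))^{-1/(β-1)}⌉ ≤ K`, the TTL `L = ln(1/(r-δ))/λ_M` achieves hit rate at
least `(q/(α+q))(1-r)`. -/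
theorem zipf_ttl_tuning (β : ℝ) (hβ : 1 < β) (K : ℕ) (hK : 1 ≤ K)
    (lam0 q alpha r δ : ℝ) (hlam0 : 0 < lam0) (hq0 : 0 < q) (hq1 : q ≤ 1)
    (halpha : 0 ≤ alpha) (hr : r ∈ Set.Ioo (0 : ℝ) 1) (hδ : δ ∈ Set.Ioo (0 : ℝ) r)
    (M : ℕ) (hM : M = ⌈(δ * zipfZ K β * (β - 1)) ^ (-(1 : ℝ) / (β - 1))⌉₊)
    (hMK : M ≤ K)
    (L : ℝ) (hLdef : L = Real.log (1 / (r - δ)) / zipfRate K β lam0 q M) :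
    (q / (alpha + q)) * (1 - r) ≤ dTTLhitRate K β lam0 q alpha L :=
  zipf_ttl_tuning_general β hβ K hK lam0 q alpha r δ hlam0 hq0 halpha hr hδ M hM hMK L hLdef
end

section
/- Let (X_j)_{j ≥ 0} be an i.i.d. sequence of nonnegative real-valued random variables on a probability space, with common CDF F(t) = ℙ(X₀ ≤ t). Let 0 ≤ θ^s ≤ θ. Then, almost surely, (1/n)·∑_{j=1}^{n} [ 𝟙(X_{j−1} ≤ θ)·𝟙(X_j ≤ θ) + 𝟙(X_{j−1} > θ)·𝟙(X_j ≤ θ^s) ] → F(θ)² + (1 − F(θ))·F(θ^s) as n → ∞. -/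
open MeasureTheory ProbabilityTheory Filter Finset

open scoped Topology

/-!
The hit indicator of request `j` is `f (X (j-1), X j)` for a fixed bounded `f`, so the hit
sequence is identically distributed and `1`-dependent. Its even- and odd-indexed subsequences are
therefore pairwise independent, and the strong law of large numbers (which only needs pairwise
independence) applies to each; the two halves have asymptotic density `1/2` and recombine to the
full average. The limit `𝔼 f(X 0, X 1)` factors by independence of `X 0` and `X 1`.
-/

lemma sum_range_eq_sum_range_two_mul_add_sum_range_two_mul_add_one {M : Type*} [AddCommMonoid M]
    (u : ℕ → M) (n : ℕ) :
    ∑ k ∈ range n, u k =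
      ∑ k ∈ range (n - n / 2), u (2 * k) + ∑ k ∈ range (n / 2), u (2 * k + 1) := by
  induction n with
  | zero => simp
  | succ n ih =>
    rw [sum_range_succ, ih]
    rcases Nat.even_or_odd' n with ⟨m, rfl | rfl⟩
    · rw [show 2 * m + 1 - (2 * m + 1) / 2 = 2 * m - 2 * m / 2 + 1 by omega,
        show (2 * m + 1) / 2 = 2 * m / 2 by omega, sum_range_succ,
        show 2 * m - 2 * m / 2 = m by omega, add_right_comm]
    · rw [show 2 * m + 1 + 1 - (2 * m + 1 + 1) / 2 = 2 * m + 1 - (2 * m + 1) / 2 by omega,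
        show (2 * m + 1 + 1) / 2 = (2 * m + 1) / 2 + 1 by omega,
        sum_range_succ (n := (2 * m + 1) / 2), show (2 * m + 1) / 2 = m by omega, add_assoc]

lemma tendsto_natCast_div_div_self (d : ℕ) :
    Tendsto (fun n : ℕ => ((n / d : ℕ) : ℝ) / n) atTop (𝓝 (d : ℝ)⁻¹) := by
  refine ((tendsto_nat_floor_mul_div_atTop (inv_nonneg.2 d.cast_nonneg)).comp
    tendsto_natCast_atTop_atTop).congr fun n => ?_
  rw [Function.comp_apply, inv_mul_eq_div, Nat.floor_div_eq_div]

section Averages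

variable {E : Type*} [NormedAddCommGroup E] [NormedSpace ℝ E]

lemma Filter.Tendsto.smul_sum_range_comp {v : ℕ → E} {a : E} {c : ℝ} {φ : ℕ → ℕ}
    (hv : Tendsto (fun m : ℕ => (m : ℝ)⁻¹ • ∑ k ∈ range m, v k) atTop (𝓝 a))
    (hφ : Tendsto φ atTop atTop) (hc : Tendsto (fun n : ℕ => (φ n : ℝ) / n) atTop (𝓝 c)) :
    Tendsto (fun n : ℕ => (n : ℝ)⁻¹ • ∑ k ∈ range (φ n), v k) atTop (𝓝 (c • a)) := by
  refine (hc.smul (hv.comp hφ)).congr' ?_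
  filter_upwards [hφ.eventually_ne_atTop 0] with n hn
  rw [Function.comp_apply, smul_smul, div_mul_eq_mul_div, mul_inv_cancel₀ (by exact_mod_cast hn),
    one_div]

theorem tendsto_smul_sum_range_of_two_mul_of_two_mul_add_one {u : ℕ → E} {a : E}
    (heven : Tendsto (fun m : ℕ => (m : ℝ)⁻¹ • ∑ k ∈ range m, u (2 * k)) atTop (𝓝 a))
    (hodd : Tendsto (fun m : ℕ => (m : ℝ)⁻¹ • ∑ k ∈ range m, u (2 * k + 1)) atTop (𝓝 a)) :
    Tendsto (fun n : ℕ => (n : ℝ)⁻¹ • ∑ k ∈ range n, u k) atTop (𝓝 a) := by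
  have hhalf : Tendsto (fun n : ℕ => ((n / 2 : ℕ) : ℝ) / n) atTop (𝓝 2⁻¹) := by
    simpa only [Nat.cast_ofNat] using tendsto_natCast_div_div_self 2
  have hrest : Tendsto (fun n : ℕ => ((n - n / 2 : ℕ) : ℝ) / n) atTop (𝓝 (1 - 2⁻¹)) := by
    refine (tendsto_const_nhds.sub hhalf).congr' ?_
    filter_upwards [eventually_ne_atTop 0] with n hn
    rw [Nat.cast_sub (Nat.div_le_self n 2), sub_div, div_self (by exact_mod_cast hn)]
  have hφ : Tendsto (fun n : ℕ => n - n / 2) atTop atTop :=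
    tendsto_atTop_atTop.2 fun b => ⟨2 * b, fun n hn => by omega⟩
  have h := (heven.smul_sum_range_comp hφ hrest).add
    (hodd.smul_sum_range_comp (Nat.tendsto_div_const_atTop two_ne_zero) hhalf)
  rw [← add_smul, sub_add_cancel, one_smul] at h
  simpa only [← smul_add, ← sum_range_eq_sum_range_two_mul_add_sum_range_two_mul_add_one] using h

end Averages

section StrongLaw

variable {Ω : Type*} {mΩ : MeasurableSpace Ω} {μ : Measure Ω}
  {E : Type*} [NormedAddCommGroup E] [NormedSpace ℝ E] [CompleteSpace E]
  [MeasurableSpace E] [BorelSpace E]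

theorem strong_law_ae_of_indepFun_of_add_one_lt (Y : ℕ → Ω → E) (hint : Integrable (Y 0) μ)
    (hindep : ∀ i j, i + 1 < j → IndepFun (Y i) (Y j) μ)
    (hident : ∀ i, IdentDistrib (Y i) (Y 0) μ μ) :
    ∀ᵐ ω ∂μ, Tendsto (fun n : ℕ => (n : ℝ)⁻¹ • ∑ i ∈ range n, Y i ω) atTop (𝓝 μ[Y 0]) := by
  have hpair (r : ℕ) (hr : r ≤ 1) :
      Pairwise (Function.onFun (IndepFun · · μ) fun k => Y (2 * k + r)) := by
    intro i j hij
    rcases hij.lt_or_gt with h | h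
    · exact hindep _ _ (by omega)
    · exact (hindep _ _ (by omega)).symm
  have heven := strong_law_ae (fun k => Y (2 * k + 0)) hint (hpair 0 zero_le_one)
    fun k => hident _
  have hodd := strong_law_ae (fun k => Y (2 * k + 1)) ((hident 1).integrable_iff.2 hint)
    (hpair 1 le_rfl) fun k => (hident _).trans (hident 1).symm
  filter_upwards [heven, hodd] with ω heven hodd
  rw [(hident 1).integral_eq] at hodd
  exact tendsto_smul_sum_range_of_two_mul_of_two_mul_add_one heven hodd

theorem strong_law_ae_comp_prodMk_add_one [IsFiniteMeasure μ] {β : Type*} [MeasurableSpace β]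
    {X : ℕ → Ω → β} (hmeas : ∀ i, Measurable (X i)) (hindep : iIndepFun X μ)
    (hident : ∀ i, IdentDistrib (X i) (X 0) μ μ) {f : β × β → E} (hf : Measurable f)
    (hint : Integrable (fun ω => f (X 0 ω, X 1 ω)) μ) :
    ∀ᵐ ω ∂μ, Tendsto (fun n : ℕ => (n : ℝ)⁻¹ • ∑ i ∈ range n, f (X i ω, X (i + 1) ω)) atTop
      (𝓝 (∫ ω, f (X 0 ω, X 1 ω) ∂μ)) :=
  strong_law_ae_of_indepFun_of_add_one_lt (fun i ω => f (X i ω, X (i + 1) ω)) hint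
    (fun i j hij => (hindep.indepFun_prodMk_prodMk hmeas i (i + 1) j (j + 1)
      (by omega) (by omega) (by omega) (by omega)).comp hf hf)
    fun i => ((hident i).prodMk ((hident (i + 1)).trans (hident 1).symm)
      (hindep.indepFun (Nat.succ_ne_self i).symm) (hindep.indepFun zero_ne_one)).comp hf

end StrongLaw

/-- `p = (previous gap, current gap)`: a hit in the deep cache, or, after a gap longer than `θ`,
in the shallow cache. -/
noncomputable def twoLevelTTLHit (θ θs : ℝ) (p : ℝ × ℝ) : ℝ :=
  (Set.Iic θ).indicator 1 p.1 * (Set.Iic θ).indicator 1 p.2 +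
    (Set.Ioi θ).indicator 1 p.1 * (Set.Iic θs).indicator 1 p.2

lemma measurable_twoLevelTTLHit (θ θs : ℝ) : Measurable (twoLevelTTLHit θ θs) := by
  unfold twoLevelTTLHit
  fun_prop (disch := measurability)

section Mean

variable {Ω : Type*} {mΩ : MeasurableSpace Ω} {μ : Measure Ω} {Y Z : Ω → ℝ}

lemma integrable_indicator_one_comp_mul [IsFiniteMeasure μ] {s t : Set ℝ} (hY : Measurable Y)
    (hZ : Measurable Z) (hs : MeasurableSet s) (ht : MeasurableSet t) :
    Integrable (fun ω => (s.indicator 1 (Y ω) * t.indicator 1 (Z ω) : ℝ)) μ := by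
  refine .of_bound (by fun_prop (disch := assumption)) 1 (ae_of_all _ fun ω => ?_)
  simp only [Set.indicator, Pi.one_apply]
  split_ifs <;> simp

lemma ProbabilityTheory.IndepFun.integral_indicator_one_comp_mul {s t : Set ℝ}
    (hYZ : IndepFun Y Z μ) (hY : Measurable Y) (hZ : Measurable Z) (hs : MeasurableSet s)
    (ht : MeasurableSet t) :
    ∫ ω, (s.indicator 1 (Y ω) * t.indicator 1 (Z ω) : ℝ) ∂μ =
      μ.real (Y ⁻¹' s) * μ.real (Z ⁻¹' t) := by
  rw [← integral_indicator_one (hY hs), ← integral_indicator_one (hZ ht)]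
  exact hYZ.integral_comp_mul_comp hY.aemeasurable hZ.aemeasurable
    ((measurable_one.indicator hs).aestronglyMeasurable)
    ((measurable_one.indicator ht).aestronglyMeasurable)

lemma integrable_twoLevelTTLHit_comp [IsFiniteMeasure μ] (hY : Measurable Y) (hZ : Measurable Z)
    (θ θs : ℝ) : Integrable (fun ω => twoLevelTTLHit θ θs (Y ω, Z ω)) μ :=
  (integrable_indicator_one_comp_mul hY hZ measurableSet_Iic measurableSet_Iic).add
    (integrable_indicator_one_comp_mul hY hZ measurableSet_Ioi measurableSet_Iic)

lemma integral_twoLevelTTLHit [IsProbabilityMeasure μ] (hY : Measurable Y) (hZ : Measurable Z)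
    (hYZ : IndepFun Y Z μ) (hident : IdentDistrib Z Y μ μ) (θ θs : ℝ) :
    ∫ ω, twoLevelTTLHit θ θs (Y ω, Z ω) ∂μ =
      μ.real {ω | Y ω ≤ θ} ^ 2 + (1 - μ.real {ω | Y ω ≤ θ}) * μ.real {ω | Y ω ≤ θs} := by
  have hcdf (t : ℝ) : μ.real (Z ⁻¹' Set.Iic t) = μ.real {ω | Y ω ≤ t} :=
    congrArg ENNReal.toReal (hident.measure_mem_eq measurableSet_Iic)
  have htail : μ.real (Y ⁻¹' Set.Ioi θ) = 1 - μ.real {ω | Y ω ≤ θ} := by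
    rw [← Set.compl_Iic, Set.preimage_compl, probReal_compl_eq_one_sub (hY measurableSet_Iic)]
    rfl
  simp only [twoLevelTTLHit]
  rw [integral_add (integrable_indicator_one_comp_mul hY hZ measurableSet_Iic measurableSet_Iic)
      (integrable_indicator_one_comp_mul hY hZ measurableSet_Ioi measurableSet_Iic),
    hYZ.integral_indicator_one_comp_mul hY hZ measurableSet_Iic measurableSet_Iic,
    hYZ.integral_indicator_one_comp_mul hY hZ measurableSet_Ioi measurableSet_Iic,
    hcdf, hcdf, htail, sq]
  rfl

end Mean

theorem two_level_ttl_hit_rate_lln_general {Ω : Type*} [MeasurableSpace Ω]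
    (μ : Measure Ω) [IsProbabilityMeasure μ]
    (X : ℕ → Ω → ℝ) (hmeas : ∀ j, Measurable (X j))
    (hindep : iIndepFun X μ)
    (hident : ∀ j, IdentDistrib (X j) (X 0) μ μ)
    (θ θs : ℝ)
    (F : ℝ → ℝ) (hF : ∀ t, F t = (μ {ω | X 0 ω ≤ t}).toReal) :
    ∀ᵐ ω ∂μ, Tendsto (fun n : ℕ => (1 / (n : ℝ)) * ∑ j ∈ Finset.Icc 1 n,
        ((if X (j - 1) ω ≤ θ then (1 : ℝ) else 0) * (if X j ω ≤ θ then (1 : ℝ) else 0) +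
         (if θ < X (j - 1) ω then (1 : ℝ) else 0) * (if X j ω ≤ θs then (1 : ℝ) else 0)))
      atTop (nhds (F θ ^ 2 + (1 - F θ) * F θs)) := by
  have hmean : F θ ^ 2 + (1 - F θ) * F θs = ∫ ω, twoLevelTTLHit θ θs (X 0 ω, X 1 ω) ∂μ := by
    rw [integral_twoLevelTTLHit (hmeas 0) (hmeas 1) (hindep.indepFun zero_ne_one) (hident 1),
      hF, hF]
    rfl
  filter_upwards [strong_law_ae_comp_prodMk_add_one hmeas hindep hident
    (measurable_twoLevelTTLHit θ θs) (integrable_twoLevelTTLHit_comp (hmeas 0) (hmeas 1) θ θs)]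
    with ω hω
  rw [hmean]
  convert hω using 2 with n
  rw [one_div, smul_eq_mul, ← Ico_add_one_right_eq_Icc, sum_Ico_eq_sum_range, Nat.add_sub_cancel]
  simp [twoLevelTTLHit, Set.indicator_apply, add_comm 1]

/-- for an i.i.d. sequence of nonnegative inter-request times `X_j` with CDF
`F`, and TTLs `0 ≤ θˢ ≤ θ`, the empirical hit rate of the two-level TTL cache converges
almost surely to `F(θ)² + (1 - F(θ)) F(θˢ)`. -/
theorem two_level_ttl_hit_rate_lln {Ω : Type*} [MeasurableSpace Ω]
    (μ : Measure Ω) [IsProbabilityMeasure μ]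
    (X : ℕ → Ω → ℝ) (hmeas : ∀ j, Measurable (X j))
    (hindep : iIndepFun X μ)
    (hident : ∀ j, IdentDistrib (X j) (X 0) μ μ)
    (hnonneg : ∀ j ω, 0 ≤ X j ω)
    (θ θs : ℝ) (h0 : 0 ≤ θs) (h1 : θs ≤ θ)
    (F : ℝ → ℝ) (hF : ∀ t, F t = (μ {ω | X 0 ω ≤ t}).toReal) :
    ∀ᵐ ω ∂μ, Tendsto (fun n : ℕ => (1 / (n : ℝ)) * ∑ j ∈ Finset.Icc 1 n,
        ((if X (j - 1) ω ≤ θ then (1 : ℝ) else 0) * (if X j ω ≤ θ then (1 : ℝ) else 0) +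
         (if θ < X (j - 1) ω then (1 : ℝ) else 0) * (if X j ω ≤ θs then (1 : ℝ) else 0)))
      atTop (nhds (F θ ^ 2 + (1 - F θ) * F θs)) :=
  two_level_ttl_hit_rate_lln_general μ X hmeas hindep hident θ θs F hF
end

section
/- Let (X_j)_{j ≥ 0} be an i.i.d. sequence of exponentially distributed random variables with rate λ > 0, let F(t) = 1 − e^{−λt}, and let 0 ≤ θ^s ≤ θ. Then, almost surely, (1/n)·∑_{j=1}^{n} [ 𝟙(X_{j−1} ≤ θ)·min(X_j, θ) + 𝟙(X_{j−1} > θ)·min(X_j, θ^s) ] → ( F(θ)² + (1 − F(θ))·F(θ^s) ) / λ as n → ∞; that is, under Poisson requests the per-request average cache occupancy (normalized size) of an object equals its hit rate divided by its arrival rate. -/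
/-!
Write `Z j = f (X (j - 1), X j)`, where `f` is the occupancy of one request. The `Z j` are not
independent, but the odd-indexed ones `Z 1, Z 3, …` are i.i.d. (they use disjoint pairs of the
`X i`), and so are the even-indexed ones. The strong law applied to each half, with each half
contributing half of the terms, makes the average of the `Z j` converge to
`E f (X 0, X 1) = ∫ f d(ν ⊗ ν)`, `ν` being the law of `X 0`. For `ν` exponential, the
layer-cake formula gives `E min (X 0) t = ∫₀ᵗ e^{-λs} ds = F t / λ`, so
`∫ f d(ν ⊗ ν) = F θ · F θ / λ + (1 - F θ) · F θs / λ`.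
-/

open MeasureTheory ProbabilityTheory Filter Finset

open Real Topology

lemma sum_Icc_one_eq_sum_odd_add_sum_even {M : Type*} [AddCommMonoid M] (Y : ℕ → M) (n : ℕ) :
    ∑ j ∈ Icc 1 n, Y j =
      ∑ i ∈ range ((n + 1) / 2), Y (2 * i + 1) + ∑ i ∈ range (n / 2), Y (2 * i + 2) := by
  induction n with
  | zero => simp
  | succ n ih =>
    rw [sum_Icc_succ_top (by omega), ih]
    obtain ⟨m, rfl | rfl⟩ := Nat.even_or_odd' n
    · rw [show (2 * m + 1 + 1) / 2 = m + 1 by omega, show (2 * m + 1) / 2 = m by omega,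
        show 2 * m / 2 = m by omega, sum_range_succ, add_right_comm]
    · rw [show (2 * m + 1 + 1 + 1) / 2 = m + 1 by omega, show (2 * m + 1 + 1) / 2 = m + 1 by omega,
        show (2 * m + 1) / 2 = m by omega, sum_range_succ (fun i => Y (2 * i + 2)), add_assoc]

lemma tendsto_add_div_two_div_self (k : ℕ) :
    Tendsto (fun n : ℕ => (((n + k) / 2 : ℕ) : ℝ) / n) atTop (𝓝 (1 / 2)) := by
  have h_lin : ∀ c : ℝ, Tendsto (fun n : ℕ => ((n : ℝ) + c) / (2 * n)) atTop (𝓝 (1 / 2)) := by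
    intro c
    have h := (tendsto_one_div_atTop_nhds_zero_nat.const_mul (c / 2)).const_add (1 / 2 : ℝ)
    rw [mul_zero, add_zero] at h
    refine h.congr' ?_
    filter_upwards [eventually_ne_atTop 0] with n hn
    field_simp
  have h_half (n : ℕ) :
      (n : ℝ) + k - 1 ≤ 2 * ((n + k) / 2 : ℕ) ∧ 2 * (((n + k) / 2 : ℕ) : ℝ) ≤ n + k := by
    have h : n + k ≤ 2 * ((n + k) / 2) + 1 ∧ 2 * ((n + k) / 2) ≤ n + k := by omega
    have h_cast : ((n + k : ℕ) : ℝ) ≤ 2 * ((n + k) / 2 : ℕ) + 1 := by exact_mod_cast h.1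
    push_cast at h_cast
    exact ⟨by linarith, by exact_mod_cast h.2⟩
  refine tendsto_of_tendsto_of_tendsto_of_le_of_le' (h_lin (k - 1)) (h_lin k) ?_ ?_ <;>
  filter_upwards [eventually_ne_atTop 0] with n hn <;>
  rw [← mul_div_mul_left _ (n : ℝ) two_ne_zero] <;>
  gcongr <;> linarith [h_half n]

lemma Filter.Tendsto.sum_range_comp_div {u : ℕ → ℝ} {E c : ℝ} {a : ℕ → ℕ}
    (hu : Tendsto (fun m : ℕ => (∑ i ∈ range m, u i) / m) atTop (𝓝 E))
    (ha : Tendsto a atTop atTop) (hac : Tendsto (fun n : ℕ => (a n : ℝ) / n) atTop (𝓝 c)) :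
    Tendsto (fun n : ℕ => (∑ i ∈ range (a n), u i) / n) atTop (𝓝 (E * c)) := by
  refine ((hu.comp ha).mul hac).congr fun n => ?_
  obtain h | h := eq_or_ne (a n) 0
  · simp [h]
  · simp only [Function.comp_apply]
    rw [div_mul_div_cancel₀ (by exact_mod_cast h)]

lemma tendsto_one_div_mul_sum_Icc_of_odd_of_even {Y : ℕ → ℝ} {E : ℝ}
    (hodd : Tendsto (fun m : ℕ => (∑ i ∈ range m, Y (2 * i + 1)) / m) atTop (𝓝 E))
    (heven : Tendsto (fun m : ℕ => (∑ i ∈ range m, Y (2 * i + 2)) / m) atTop (𝓝 E)) :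
    Tendsto (fun n : ℕ => (1 / (n : ℝ)) * ∑ j ∈ Icc 1 n, Y j) atTop (𝓝 E) := by
  have h_half (k : ℕ) : Tendsto (fun n : ℕ => (n + k) / 2) atTop atTop :=
    (Nat.tendsto_div_const_atTop two_ne_zero).comp (tendsto_add_atTop_nat k)
  have h := (hodd.sum_range_comp_div (h_half 1) (tendsto_add_div_two_div_self 1)).add
    (heven.sum_range_comp_div (h_half 0) (tendsto_add_div_two_div_self 0))
  rw [← mul_add, add_halves, mul_one] at h
  refine h.congr fun n => ?_
  rw [sum_Icc_one_eq_sum_odd_add_sum_even, one_div_mul_eq_div, add_div, add_zero]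

namespace ProbabilityTheory

variable {Ω α : Type*} [MeasurableSpace Ω] [MeasurableSpace α] {μ : Measure Ω} {X : ℕ → Ω → α}

lemma iIndepFun.map_prodMk_eq_prod [IsFiniteMeasure μ] (hindep : iIndepFun X μ)
    (hident : ∀ i, IdentDistrib (X i) (X 0) μ μ) {i j : ℕ} (hij : i ≠ j) :
    μ.map (fun ω => (X i ω, X j ω)) = (μ.map (X 0)).prod (μ.map (X 0)) := by
  rw [(indepFun_iff_map_prod_eq_prod_map_map (hident i).aemeasurable_fst
    (hident j).aemeasurable_fst).1 (hindep.indepFun hij), (hident i).map_eq, (hident j).map_eq]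

lemma iIndepFun.strong_law_ae_pairs [IsFiniteMeasure μ] (hindep : iIndepFun X μ)
    (hident : ∀ i, IdentDistrib (X i) (X 0) μ μ) {f : α × α → ℝ} (hf : Measurable f)
    (hint : Integrable f ((μ.map (X 0)).prod (μ.map (X 0)))) (c : ℕ) :
    ∀ᵐ ω ∂μ, Tendsto (fun m : ℕ => (∑ i ∈ range m, f (X (2 * i + c) ω, X (2 * i + c + 1) ω)) / m)
      atTop (𝓝 (∫ p, f p ∂(μ.map (X 0)).prod (μ.map (X 0)))) := by
  set pair : ℕ → Ω → α × α := fun i ω => (X (2 * i + c) ω, X (2 * i + c + 1) ω)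
  have h_meas (i : ℕ) : AEMeasurable (pair i) μ :=
    (hident _).aemeasurable_fst.prodMk (hident _).aemeasurable_fst
  have h_map (i : ℕ) : μ.map (pair i) = (μ.map (X 0)).prod (μ.map (X 0)) :=
    hindep.map_prodMk_eq_prod hident (by omega)
  have h_indep : Pairwise (Function.onFun (· ⟂ᵢ[μ] ·) fun i => f ∘ pair i) := fun i j hij =>
    (hindep.indepFun_prodMk_prodMk₀ (fun k => (hident k).aemeasurable_fst) (2 * i + c)
      (2 * i + c + 1) (2 * j + c) (2 * j + c + 1)
      (by omega) (by omega) (by omega) (by omega)).comp hf hf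
  have h_ident (i : ℕ) : IdentDistrib (f ∘ pair i) (f ∘ pair 0) μ μ :=
    (IdentDistrib.mk (h_meas i) (h_meas 0) (by rw [h_map, h_map])).comp hf
  have h_int : Integrable (f ∘ pair 0) μ :=
    (integrable_map_measure hf.aestronglyMeasurable (h_meas 0)).1 (h_map 0 ▸ hint)
  have h_mean : μ[f ∘ pair 0] = ∫ p, f p ∂(μ.map (X 0)).prod (μ.map (X 0)) := by
    rw [← h_map 0, integral_map (h_meas 0) hf.aestronglyMeasurable]
    rfl
  exact h_mean ▸ strong_law_ae_real (fun i => f ∘ pair i) h_int h_indep h_ident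

lemma iIndepFun.strong_law_ae_consecutive_pairs [IsFiniteMeasure μ] (hindep : iIndepFun X μ)
    (hident : ∀ i, IdentDistrib (X i) (X 0) μ μ) {f : α × α → ℝ} (hf : Measurable f)
    (hint : Integrable f ((μ.map (X 0)).prod (μ.map (X 0)))) :
    ∀ᵐ ω ∂μ, Tendsto (fun n : ℕ => (1 / (n : ℝ)) * ∑ j ∈ Icc 1 n, f (X (j - 1) ω, X j ω))
      atTop (𝓝 (∫ p, f p ∂(μ.map (X 0)).prod (μ.map (X 0)))) := by
  filter_upwards [hindep.strong_law_ae_pairs hident hf hint 0,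
    hindep.strong_law_ae_pairs hident hf hint 1] with ω hodd heven
  exact tendsto_one_div_mul_sum_Icc_of_odd_of_even hodd heven

end ProbabilityTheory

lemma integrable_min_const_of_ae_nonneg {ν : Measure ℝ} [IsFiniteMeasure ν]
    (hν : ∀ᵐ x ∂ν, 0 ≤ x) (t : ℝ) : Integrable (fun x => min x t) ν := by
  refine Integrable.mono' (integrable_const |t|)
    (measurable_id.min measurable_const).aestronglyMeasurable ?_
  filter_upwards [hν] with x hx
  rw [Real.norm_eq_abs, abs_le]
  constructor <;> cases min_cases x t <;> cases abs_cases t <;> linarith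

lemma integral_min_const_eq_intervalIntegral {ν : Measure ℝ} [IsFiniteMeasure ν]
    (hν : ∀ᵐ x ∂ν, 0 ≤ x) {t : ℝ} (ht : 0 ≤ t) :
    ∫ x, min x t ∂ν = ∫ s in 0..t, ν.real (Set.Ioi s) := by
  have h_nonneg : 0 ≤ᵐ[ν] fun x => min x t := by
    filter_upwards [hν] with x hx
    exact le_min hx ht
  rw [(integrable_min_const_of_ae_nonneg hν t).integral_eq_integral_meas_lt h_nonneg,
    intervalIntegral.integral_of_le ht, integral_Ioc_eq_integral_Ioo,
    ← Set.Ioi_inter_Iio, ← setIntegral_indicator measurableSet_Iio]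
  refine setIntegral_congr_fun measurableSet_Ioi fun s _ => ?_
  by_cases hst : s < t
  · simp only [lt_inf_iff, hst, and_true, Set.mem_Iio, Set.indicator_of_mem]
    rfl
  · simp [hst]

namespace ProbabilityTheory

variable {r : ℝ}

lemma expMeasure_ae_nonneg (r : ℝ) : ∀ᵐ x ∂expMeasure r, 0 ≤ x := by
  rw [ae_iff]
  simp only [not_le]
  exact (withDensity_apply _ measurableSet_Iio).trans (lintegral_exponentialPDF_of_nonpos le_rfl)

lemma expMeasure_real_Iic (hr : 0 < r) {t : ℝ} (ht : 0 ≤ t) :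
    (expMeasure r).real (Set.Iic t) = 1 - exp (-(r * t)) := by
  have := isProbabilityMeasure_expMeasure hr
  rw [← cdf_eq_real, cdf_expMeasure_eq hr, if_pos ht]

lemma expMeasure_real_Ioi (hr : 0 < r) {t : ℝ} (ht : 0 ≤ t) :
    (expMeasure r).real (Set.Ioi t) = exp (-(r * t)) := by
  have := isProbabilityMeasure_expMeasure hr
  rw [← Set.compl_Iic, probReal_compl_eq_one_sub measurableSet_Iic, expMeasure_real_Iic hr ht]
  ring

lemma integral_min_const_expMeasure (hr : 0 < r) {t : ℝ} (ht : 0 ≤ t) :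
    ∫ x, min x t ∂expMeasure r = (1 - exp (-(r * t))) / r := by
  have := isProbabilityMeasure_expMeasure hr
  rw [integral_min_const_eq_intervalIntegral (expMeasure_ae_nonneg r) ht,
    intervalIntegral.integral_congr fun s hs => expMeasure_real_Ioi hr (Set.uIcc_of_le ht ▸ hs).1]
  simp only [← neg_mul]
  rw [intervalIntegral.integral_comp_mul_left (fun x => exp x) (neg_ne_zero.2 hr.ne'), integral_exp,
    mul_zero, exp_zero, smul_eq_mul]
  field_simp
  ring

end ProbabilityTheory

/-- The time the object spends in the cache after a request, as a function of
`p = (previous inter-request gap, next inter-request gap)`: the previous gap decides whether the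
request is stored with the deep TTL `θ` or the shallow TTL `θs`. -/
noncomputable def twoLevelOccupancy (θ θs : ℝ) (p : ℝ × ℝ) : ℝ :=
  (if p.1 ≤ θ then 1 else 0) * min p.2 θ + (if θ < p.1 then 1 else 0) * min p.2 θs

section TwoLevelOccupancy

variable {θ θs : ℝ} {ν : Measure ℝ}

lemma measurable_twoLevelOccupancy : Measurable (twoLevelOccupancy θ θs) :=
  ((Measurable.ite (measurableSet_le measurable_fst measurable_const) measurable_const
    measurable_const).mul (measurable_snd.min measurable_const)).add
  ((Measurable.ite (measurableSet_lt measurable_const measurable_fst) measurable_const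
    measurable_const).mul (measurable_snd.min measurable_const))

variable [IsFiniteMeasure ν]

lemma integrable_twoLevelOccupancy (hθ : Integrable (fun x => min x θ) ν)
    (hθs : Integrable (fun x => min x θs) ν) : Integrable (twoLevelOccupancy θ θs) (ν.prod ν) :=
  (((integrable_const (1 : ℝ)).indicator measurableSet_Iic).mul_prod hθ).add
    (((integrable_const (1 : ℝ)).indicator measurableSet_Ioi).mul_prod hθs)

lemma integral_twoLevelOccupancy (hθ : Integrable (fun x => min x θ) ν)
    (hθs : Integrable (fun x => min x θs) ν) :
    ∫ p, twoLevelOccupancy θ θs p ∂ν.prod ν =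
      ν.real (Set.Iic θ) * ∫ x, min x θ ∂ν + ν.real (Set.Ioi θ) * ∫ x, min x θs ∂ν := by
  unfold twoLevelOccupancy
  rw [integral_add, integral_prod_mul (fun x => if x ≤ θ then (1 : ℝ) else 0) (min · θ),
    integral_prod_mul (fun x => if θ < x then (1 : ℝ) else 0) (min · θs),
    ← integral_indicator_one measurableSet_Iic, ← integral_indicator_one measurableSet_Ioi]
  · rfl
  · exact ((integrable_const (1 : ℝ)).indicator measurableSet_Iic).mul_prod hθ
  · exact ((integrable_const (1 : ℝ)).indicator measurableSet_Ioi).mul_prod hθs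

end TwoLevelOccupancy

theorem poisson_size_equals_hit_rate_over_rate_general {Ω : Type*} [MeasurableSpace Ω]
    (μ : Measure Ω) [IsProbabilityMeasure μ]
    (X : ℕ → Ω → ℝ)
    (hindep : iIndepFun X μ)
    (hident : ∀ j, IdentDistrib (X j) (X 0) μ μ)
    (lam0 : ℝ) (hlam0 : 0 < lam0)
    (hlaw : Measure.map (X 0) μ = expMeasure lam0)
    (F : ℝ → ℝ) (hF : ∀ t, F t = 1 - Real.exp (-lam0 * t))
    (θ θs : ℝ) (h0 : 0 ≤ θs) (h1 : θs ≤ θ) :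
    ∀ᵐ ω ∂μ, Tendsto (fun n : ℕ => (1 / (n : ℝ)) * ∑ j ∈ Finset.Icc 1 n,
        ((if X (j - 1) ω ≤ θ then (1 : ℝ) else 0) * min (X j ω) θ +
         (if θ < X (j - 1) ω then (1 : ℝ) else 0) * min (X j ω) θs))
      atTop (nhds ((F θ ^ 2 + (1 - F θ) * F θs) / lam0)) := by
  have hθ : 0 ≤ θ := h0.trans h1
  have := isProbabilityMeasure_expMeasure hlam0
  have h_min (t : ℝ) := integrable_min_const_of_ae_nonneg (expMeasure_ae_nonneg lam0) t
  have h_limit : (F θ ^ 2 + (1 - F θ) * F θs) / lam0 =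
      ∫ p, twoLevelOccupancy θ θs p ∂(expMeasure lam0).prod (expMeasure lam0) := by
    rw [integral_twoLevelOccupancy (h_min θ) (h_min θs), expMeasure_real_Iic hlam0 hθ,
      expMeasure_real_Ioi hlam0 hθ, integral_min_const_expMeasure hlam0 hθ,
      integral_min_const_expMeasure hlam0 h0, hF, hF, neg_mul, neg_mul]
    ring
  rw [h_limit, ← hlaw]
  exact hindep.strong_law_ae_consecutive_pairs hident measurable_twoLevelOccupancy
    (hlaw ▸ integrable_twoLevelOccupancy (h_min θ) (h_min θs))

/-- for i.i.d. exponential(λ) inter-request times and TTLs `0 ≤ θˢ ≤ θ`,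
the per-request average cache occupancy of the two-level TTL cache converges almost
surely to its hit rate divided by λ, i.e. to `(F(θ)² + (1 - F(θ)) F(θˢ))/λ` where
`F(t) = 1 - e^{-λt}`. -/
theorem poisson_size_equals_hit_rate_over_rate {Ω : Type*} [MeasurableSpace Ω]
    (μ : Measure Ω) [IsProbabilityMeasure μ]
    (X : ℕ → Ω → ℝ) (hmeas : ∀ j, Measurable (X j))
    (hindep : iIndepFun X μ)
    (hident : ∀ j, IdentDistrib (X j) (X 0) μ μ)
    (lam0 : ℝ) (hlam0 : 0 < lam0)
    (hlaw : Measure.map (X 0) μ = expMeasure lam0)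
    (F : ℝ → ℝ) (hF : ∀ t, F t = 1 - Real.exp (-lam0 * t))
    (θ θs : ℝ) (h0 : 0 ≤ θs) (h1 : θs ≤ θ) :
    ∀ᵐ ω ∂μ, Tendsto (fun n : ℕ => (1 / (n : ℝ)) * ∑ j ∈ Finset.Icc 1 n,
        ((if X (j - 1) ω ≤ θ then (1 : ℝ) else 0) * min (X j ω) θ +
         (if θ < X (j - 1) ω then (1 : ℝ) else 0) * min (X j ω) θs))
      atTop (nhds ((F θ ^ 2 + (1 - F θ) * F θs) / lam0)) :=
  poisson_size_equals_hit_rate_over_rate_general μ X hindep hident lam0 hlam0 hlaw F hF θ θs h0 h1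
end
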